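/- arXiv:2203.16129 — 9 statements merged into one kernel-verified Lean document; each statement's English description precedes it below -/
import Mathlib

section
/- Let (P, L) be an antipodal plane of order s ≥ 2. Let P₀ ∈ P be incident with a line ℓ ∈ L, let Q ∈ P be a point such that no line of L is incident with both P₀ and Q (the antipodal point P₀^⊥), and let m ∈ L be a line such that no point of P is incident with both ℓ and m (the antipodal line ℓ^⊥). Then Q is incident with m; consequently, the set of points incident with m is exactly the set of antipodal points of the points incident with ℓ. -/
/-- An antipodal plane of order `s`: a partial linear space with
`s^2 + s + 2` points and lines, every line incident with exactly `s + 1` points and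
every point incident with exactly `s + 1` lines. -/
structure IsAntipodalPlane {P L : Type*} (s : ℕ) (R : P → L → Prop) : Prop where
  line_two_le : ∀ l : L, 2 ≤ {x | R x l}.ncard
  partial_linear : ∀ x y : P, x ≠ y → ∀ l m : L, R x l → R y l → R x m → R y m → l = m
  card_points : Nat.card P = s ^ 2 + s + 2
  card_lines : Nat.card L = s ^ 2 + s + 2
  line_card : ∀ l : L, {x | R x l}.ncard = s + 1
  point_card : ∀ x : P, {l | R x l}.ncard = s + 1

/-- If `P₀` lies on `ℓ`, `Q` is the antipodal point of `P₀`, and `m` is the antipodal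
line of `ℓ`, then `Q` lies on `m`; consequently the point set of `m` consists exactly
of the antipodal points of the points of `ℓ`. -/
theorem antipodal_point_mem_antipodal_line {P L : Type} (s : ℕ) (hs : 2 ≤ s)
    (R : P → L → Prop) (h : IsAntipodalPlane s R)
    (P₀ Q : P) (ℓ m : L)
    (hP₀ : R P₀ ℓ)
    (hQ : ∀ l : L, ¬(R P₀ l ∧ R Q l))
    (hm : ∀ x : P, ¬(R x ℓ ∧ R x m)) :
    R Q m ∧ {x | R x m} = {y | ∃ x : P, R x ℓ ∧ ∀ l : L, ¬(R x l ∧ R y l)} := by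
  classical
  have hPfin : Finite P := Nat.finite_of_card_ne_zero (by rw [h.card_points]; positivity)
  have hLfin : Finite L := Nat.finite_of_card_ne_zero (by rw [h.card_lines]; positivity)
  cases nonempty_fintype P
  cases nonempty_fintype L
  -- dual partial linearity: two lines meet in at most one point
  have dpl : ∀ (l l' : L) (x y : P), l ≠ l' → R x l → R x l' → R y l → R y l' → x = y := by
    intro l l' x y hll hxl hxl' hyl hyl'
    by_contra hxy
    exact hll (h.partial_linear x y hxy l l' hxl hyl hxl' hyl')
  -- Finset of points on a line
  have linecard : ∀ l : L, ({x | R x l}.toFinset).card = s + 1 := by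
    intro l
    rw [← Set.ncard_eq_toFinset_card']
    exact h.line_card l
  have pointcard : ∀ x : P, ({l | R x l}.toFinset).card = s + 1 := by
    intro x
    rw [← Set.ncard_eq_toFinset_card']
    exact h.point_card x
  -- Main lemma: if A lies on ℓ and B is antipodal to A, then B lies on m.
  have key : ∀ A B : P, R A ℓ → (∀ l, ¬(R A l ∧ R B l)) → R B m := by
    intro A B hA hB
    have hBA : B ≠ A := by
      intro e; subst e; exact hB ℓ ⟨hA, hA⟩
    have hAm : ¬ R A m := fun hh => hm A ⟨hA, hh⟩
    -- uniqueness of the antipodal point of A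
    have huniq : ∀ x : P, x ≠ A → (∀ l, ¬(R A l ∧ R x l)) → x = B := by
      intro x hxA hx
      by_contra hxB
      set T : Finset L := {l | R A l}.toFinset with hT
      have hTmem : ∀ l, l ∈ T ↔ R A l := by
        intro l; simp [hT]
      set pts : L → Finset P := fun l => ({y | R y l}.toFinset).erase A with hpts
      have hptscard : ∀ l ∈ T, (pts l).card = s := by
        intro l hl
        rw [hpts]
        rw [Finset.card_erase_of_mem (by simp [(hTmem l).1 hl]), linecard l]
        omega
      set Bfin : Finset P := T.biUnion pts with hBfin
      have hdisj : ∀ l ∈ T, ∀ l' ∈ T, l ≠ l' → Disjoint (pts l) (pts l') := by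
        intro l hl l' hl' hne
        rw [Finset.disjoint_left]
        intro y hy hy'
        simp only [hpts, Finset.mem_erase, Set.mem_toFinset, Set.mem_setOf_eq] at hy hy'
        exact hne (h.partial_linear A y (Ne.symm hy.1) l l' ((hTmem l).1 hl) hy.2
          ((hTmem l').1 hl') hy'.2)
      have hBcard : Bfin.card = (s + 1) * s := by
        rw [hBfin, Finset.card_biUnion hdisj]
        rw [Finset.sum_congr rfl hptscard, Finset.sum_const, pointcard A, smul_eq_mul]
      have hxB' : x ∉ Bfin := by
        intro hxb
        rw [hBfin, Finset.mem_biUnion] at hxb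
        obtain ⟨l, hl, hxl⟩ := hxb
        simp only [hpts, Finset.mem_erase, Set.mem_toFinset, Set.mem_setOf_eq] at hxl
        exact hx l ⟨(hTmem l).1 hl, hxl.2⟩
      have hBB' : B ∉ Bfin := by
        intro hxb
        rw [hBfin, Finset.mem_biUnion] at hxb
        obtain ⟨l, hl, hxl⟩ := hxb
        simp only [hpts, Finset.mem_erase, Set.mem_toFinset, Set.mem_setOf_eq] at hxl
        exact hB l ⟨(hTmem l).1 hl, hxl.2⟩
      have hAB' : A ∉ Bfin := by
        intro hxb
        rw [hBfin, Finset.mem_biUnion] at hxb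
        obtain ⟨l, hl, hxl⟩ := hxb
        simp only [hpts, Finset.mem_erase, Set.mem_toFinset, Set.mem_setOf_eq] at hxl
        exact hxl.1 rfl
      set F : Finset P := insert A (insert B (insert x Bfin)) with hF
      have hFcard : F.card = (s + 1) * s + 3 := by
        rw [hF, Finset.card_insert_of_notMem, Finset.card_insert_of_notMem,
          Finset.card_insert_of_notMem hxB', hBcard]
        · simp only [Finset.mem_insert]
          push_neg
          exact ⟨fun e => hxB (e.symm), hBB'⟩
        · simp only [Finset.mem_insert]
          push_neg
          exact ⟨Ne.symm hBA, Ne.symm hxA, hAB'⟩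
      have hle : F.card ≤ Fintype.card P := Finset.card_le_univ F
      rw [← Nat.card_eq_fintype_card, h.card_points] at hle
      rw [hFcard] at hle
      nlinarith
    -- now suppose B is not on m and derive a contradiction by counting
    by_contra hBm
    have hjoin : ∀ x : P, R x m → ∃ l, R A l ∧ R x l := by
      intro x hxm
      by_contra hxj
      push_neg at hxj
      have : x = B := huniq x (fun e => hAm (e ▸ hxm))
        (fun l => fun ⟨h1, h2⟩ => hxj l h1 h2)
      exact hBm (this ▸ hxm)
    set f : P → L := fun x => if hx : ∃ l, R A l ∧ R x l then hx.choose else ℓ with hf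
    have hfspec : ∀ x : P, R x m → R A (f x) ∧ R x (f x) := by
      intro x hxm
      have hx := hjoin x hxm
      simp only [hf, dif_pos hx]
      exact hx.choose_spec
    set Mfin : Finset P := {x | R x m}.toFinset with hM
    set Tfin : Finset L := ({l | R A l}.toFinset).erase ℓ with hTf
    have hTcard : Tfin.card = s := by
      rw [hTf, Finset.card_erase_of_mem (by simp [hA]), pointcard A]
      omega
    have hmaps : ∀ x ∈ Mfin, f x ∈ Tfin := by
      intro x hx
      rw [hM, Set.mem_toFinset] at hx
      obtain ⟨h1, h2⟩ := hfspec x hx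
      rw [hTf, Finset.mem_erase]
      refine ⟨fun e => hm x ⟨e ▸ h2, hx⟩, by simpa using h1⟩
    have hinj : Set.InjOn f Mfin := by
      intro x hx y hy hxy
      have hx' : R x m := by simpa [hM] using hx
      have hy' : R y m := by simpa [hM] using hy
      have h1 := hfspec x hx'
      have h2 := hfspec y hy'
      have hfm : f x ≠ m := fun e => hAm (e ▸ h1.1)
      exact dpl (f x) m x y hfm h1.2 hx' (hxy ▸ h2.2) hy'
    have := Finset.card_le_card_of_injOn f hmaps hinj
    rw [hTcard] at this
    have hMcard : Mfin.card = s + 1 := linecard m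
    omega
  have hQm : R Q m := key P₀ Q hP₀ hQ
  refine ⟨hQm, ?_⟩
  ext y
  simp only [Set.mem_setOf_eq]
  constructor
  · intro hy
    by_contra hcon
    push_neg at hcon
    -- every point of ℓ is joined to y; derive contradiction
    have hjoin : ∀ x : P, R x ℓ → ∃ l, R x l ∧ R y l := by
      intro x hx
      obtain ⟨l, h1, h2⟩ := hcon x hx
      exact ⟨l, h1, h2⟩
    have hyℓ : ¬ R y ℓ := fun hh => hm y ⟨hh, hy⟩
    set g : P → L := fun x => if hx : ∃ l, R x l ∧ R y l then hx.choose else m with hg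
    have hgspec : ∀ x : P, R x ℓ → R x (g x) ∧ R y (g x) := by
      intro x hx
      have hx' := hjoin x hx
      simp only [hg, dif_pos hx']
      exact hx'.choose_spec
    set Lfin : Finset P := {x | R x ℓ}.toFinset with hLf
    set Yfin : Finset L := ({l | R y l}.toFinset).erase m with hYf
    have hYcard : Yfin.card = s := by
      rw [hYf, Finset.card_erase_of_mem (by simp [hy]), pointcard y]
      omega
    have hmaps : ∀ x ∈ Lfin, g x ∈ Yfin := by
      intro x hx
      rw [hLf, Set.mem_toFinset] at hx
      obtain ⟨h1, h2⟩ := hgspec x hx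
      rw [hYf, Finset.mem_erase]
      refine ⟨fun e => hm x ⟨hx, e ▸ h1⟩, by simpa using h2⟩
    have hinj : Set.InjOn g Lfin := by
      intro x hx x' hx' hxx
      have hx1 : R x ℓ := by simpa [hLf] using hx
      have hx2 : R x' ℓ := by simpa [hLf] using hx'
      have h1 := hgspec x hx1
      have h2 := hgspec x' hx2
      have hgℓ : g x ≠ ℓ := fun e => hyℓ (e ▸ h1.2)
      exact dpl (g x) ℓ x x' hgℓ h1.1 hx1 (hxx ▸ h2.1) hx2
    have := Finset.card_le_card_of_injOn g hmaps hinj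
    rw [hYcard] at this
    have : Lfin.card = s + 1 := linecard ℓ
    omega
  · rintro ⟨x, hx, hxy⟩
    exact key x y hx hxy
end

section
/- Let q be a prime power. There exists an antipodal plane of order 2 together with an embedding of it into PG(2,q) if and only if q is a power of 3 or q ≡ 1 (mod 3). -/
/-- Points of `PG(2,q)`: the 1-dimensional subspaces of `F_q ^ 3`. -/
def PGPoint (F : Type*) [Field F] : Type _ :=
  {W : Submodule F (Fin 3 → F) // Module.finrank F W = 1}

/-- Lines of `PG(2,q)`: the 2-dimensional subspaces of `F_q ^ 3`. -/
def PGLine (F : Type*) [Field F] : Type _ :=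
  {W : Submodule F (Fin 3 → F) // Module.finrank F W = 2}

/-- Incidence in `PG(2,q)`: containment of subspaces. -/
def PGIncidence (F : Type*) [Field F] : PGPoint F → PGLine F → Prop :=
  fun x l => x.1 ≤ l.1

/-- An embedding of the incidence structure `R` into the incidence structure `R'`:
injective maps on points and lines preserving incidence and non-incidence. -/
def HasEmbedding {P L P' L' : Type*} (R : P → L → Prop) (R' : P' → L' → Prop) : Prop :=
  ∃ (φ : P → P') (ψ : L → L'), Function.Injective φ ∧ Function.Injective ψ ∧
    ∀ (x : P) (l : L), R x l ↔ R' (φ x) (ψ l)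

/-!
An antipodal plane of order `2` has `8` points, three on each line and three lines through each
point, so every point is joined to exactly six others and has a unique antipode. Starting from a
point `p`, its antipode and a line `M` avoiding both, the remaining lines are found one at a time,
because the three lines through a point cover the six points joined to it: the plane is the
Möbius–Kantor configuration `8₃`. Taking four of its points as the standard frame of `PG(2,F)`, the
collinearities of `8₃` force a root of `X ^ 2 - X + 1`; conversely such a root gives explicit
coordinates for `8₃`. Over `F_q` this polynomial has a root iff `3 = 0` (the root `-1`) or `Fˣ`
has an element of order `3`, that is, iff `q` is a power of `3` or `q ≡ 1 (mod 3)`.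
-/

open Matrix

theorem HasEmbedding.trans {P L P' L' P'' L'' : Type*} {R : P → L → Prop} {R' : P' → L' → Prop}
    {R'' : P'' → L'' → Prop} (h : HasEmbedding R R') (h' : HasEmbedding R' R'') :
    HasEmbedding R R'' := by
  obtain ⟨φ, ψ, hφ, hψ, hR⟩ := h
  obtain ⟨φ', ψ', hφ', hψ', hR'⟩ := h'
  exact ⟨φ' ∘ φ, ψ' ∘ ψ, hφ'.comp hφ, hψ'.comp hψ, fun x l => (hR x l).trans (hR' _ _)⟩

theorem Set.eq_insert_insert_singleton_of_ncard_eq_three {α : Type*} {s : Set α} (hs : s.ncard = 3)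
    {x y z : α} (hxy : x ≠ y) (hxz : x ≠ z) (hyz : y ≠ z) (hx : x ∈ s) (hy : y ∈ s) (hz : z ∈ s) :
    s = {x, y, z} :=
  (Set.eq_of_subset_of_ncard_le (by simp [Set.insert_subset_iff, hx, hy, hz])
    (by rw [hs, Set.ncard_eq_three.2 ⟨x, y, z, hxy, hxz, hyz, rfl⟩])
    (Set.finite_of_ncard_ne_zero (by omega))).symm

theorem Set.exists_mem_ne_ne_of_two_lt_ncard {α : Type*} {s : Set α} (hs : 2 < s.ncard) (x y : α) :
    ∃ z ∈ s, z ≠ x ∧ z ≠ y := by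
  by_contra! h
  have hsub : s ⊆ {x, y} := fun z hz => by
    by_cases hzx : z = x
    · simp [hzx]
    · simp [h z hz hzx]
  have := (Set.ncard_le_ncard hsub).trans (Set.ncard_insert_le x {y})
  simp only [Set.ncard_singleton] at this
  omega

namespace IsAntipodalPlane

variable {P L : Type*} {R : P → L → Prop} {s : ℕ}

theorem exists_separating_line (hR : IsAntipodalPlane s R) (hs : s ≠ 0) {x y : P} (hxy : x ≠ y) :
    ∃ l, R x l ∧ ¬R y l := by
  have h : 1 < {l | R x l}.ncard := by rw [hR.point_card]; omega
  obtain ⟨l, m, hl, hm, hlm⟩ := (Set.one_lt_ncard_iff (Set.finite_of_ncard_pos (by omega))).1 h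
  by_contra! hy
  exact hlm (hR.partial_linear x y hxy l m hl (hy l hl) hm (hy m hm))

theorem exists_separating_point (hR : IsAntipodalPlane s R) {l m : L} (hlm : l ≠ m) :
    ∃ x, R x l ∧ ¬R x m := by
  obtain ⟨x, y, hx, hy, hxy⟩ := (Set.one_lt_ncard_iff
    (Set.finite_of_ncard_pos (by have := hR.line_two_le l; omega))).1 (hR.line_two_le l)
  by_contra! hm
  exact hlm (hR.partial_linear x y hxy l m hx hy (hm x hx) (hm y hy))

theorem hasEmbedding_of_forall_iff (hR : IsAntipodalPlane s R) (hs : s ≠ 0) {P' L' : Type*}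
    {R' : P' → L' → Prop} (φ : P → P') (ψ : L → L') (h : ∀ x l, R x l ↔ R' (φ x) (ψ l)) :
    HasEmbedding R R' := by
  refine ⟨φ, ψ, fun x y hxy => ?_, fun l m hlm => ?_, h⟩
  · by_contra hne
    obtain ⟨l, hx, hy⟩ := hR.exists_separating_line hs hne
    exact hy ((h y l).2 (hxy ▸ (h x l).1 hx))
  · by_contra hne
    obtain ⟨x, hl, hm⟩ := hR.exists_separating_point hne
    exact hm ((h x m).2 (hlm ▸ (h x l).1 hl))

theorem inter_eq_singleton (hR : IsAntipodalPlane s R) {x : P} {l m : L} (hlm : l ≠ m)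
    (hl : R x l) (hm : R x m) : {z | R z l} ∩ {z | R z m} = {x} := by
  ext z
  refine ⟨fun ⟨hzl, hzm⟩ => ?_, fun hz => hz ▸ ⟨hl, hm⟩⟩
  by_contra hzx
  exact hlm (hR.partial_linear z x hzx l m hzl hl hzm hm)

end IsAntipodalPlane

/-- The Möbius–Kantor configuration `8₃`: the lines are the translates `{j, j + 1, j + 3}` of a
set whose differences `±1, ±2, ±3` are distinct modulo `8`, so two points are joined unless they
differ by `4`. -/
def moebiusKantor (i j : Fin 8) : Prop := i = j ∨ i = j + 1 ∨ i = j + 3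

instance (i j : Fin 8) : Decidable (moebiusKantor i j) :=
  inferInstanceAs (Decidable (i = j ∨ _))

theorem ncard_setOf_moebiusKantor (l : Fin 8) : {x | moebiusKantor x l}.ncard = 3 := by
  rw [Set.ncard_eq_toFinset_card', Set.toFinset_ofPred]
  revert l
  decide

theorem isAntipodalPlane_moebiusKantor : IsAntipodalPlane 2 moebiusKantor where
  line_two_le l := by rw [ncard_setOf_moebiusKantor]; omega
  partial_linear := by decide
  card_points := by simp
  card_lines := by simp
  line_card := ncard_setOf_moebiusKantor
  point_card x := by
    rw [Set.ncard_eq_toFinset_card', Set.toFinset_ofPred]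
    revert x
    decide

namespace IsAntipodalPlane

variable {P L : Type*} {R : P → L → Prop}

theorem rel_iff_of_three_points (hR : IsAntipodalPlane 2 R) {l : L} {x y z : P} (hxy : x ≠ y)
    (hxz : x ≠ z) (hyz : y ≠ z) (hx : R x l) (hy : R y l) (hz : R z l) (w : P) :
    R w l ↔ w = x ∨ w = y ∨ w = z :=
  Set.ext_iff.1 (Set.eq_insert_insert_singleton_of_ncard_eq_three (hR.line_card l) hxy hxz hyz
    hx hy hz) w

theorem rel_iff_of_three_lines (hR : IsAntipodalPlane 2 R) {x : P} {l m n : L} (hlm : l ≠ m)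
    (hln : l ≠ n) (hmn : m ≠ n) (hl : R x l) (hm : R x m) (hn : R x n) (k : L) :
    R x k ↔ k = l ∨ k = m ∨ k = n :=
  Set.ext_iff.1 (Set.eq_insert_insert_singleton_of_ncard_eq_three (hR.point_card x) hlm hln hmn
    hl hm hn) k

theorem exists_antipode (hR : IsAntipodalPlane 2 R) (x : P) :
    ∃ y, ∀ z, (∃ l, R x l ∧ R z l) ↔ z ≠ y := by
  have : Finite P := Nat.finite_of_card_ne_zero (by rw [hR.card_points]; norm_num)
  obtain ⟨l, m, n, hlm, hln, hmn, hx⟩ := Set.ncard_eq_three.1 (hR.point_card x)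
  have hmem : ∀ k, R x k ↔ k = l ∨ k = m ∨ k = n := fun k => Set.ext_iff.1 hx k
  have hxl := (hmem l).2 (Or.inl rfl)
  have hxm := (hmem m).2 (Or.inr (Or.inl rfl))
  have hxn := (hmem n).2 (Or.inr (Or.inr rfl))
  set S := {z | ∃ k, R x k ∧ R z k}
  have hS : S = {z | R z l} ∪ {z | R z m} ∪ {z | R z n} := by
    ext z
    constructor
    · rintro ⟨k, hk, hz⟩
      rcases (hmem k).1 hk with rfl | rfl | rfl <;> simp [hz]
    · rintro ((hz | hz) | hz)
      exacts [⟨l, hxl, hz⟩, ⟨m, hxm, hz⟩, ⟨n, hxn, hz⟩]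
  have hS7 : S.ncard = 7 := by
    rw [hS]
    have h1 := Set.ncard_union_add_ncard_inter {z | R z l} {z | R z m}
    have h2 := Set.ncard_union_add_ncard_inter ({z | R z l} ∪ {z | R z m}) {z | R z n}
    rw [Set.union_inter_distrib_right, hR.inter_eq_singleton hln hxl hxn,
      hR.inter_eq_singleton hmn hxm hxn, Set.union_self] at h2
    rw [hR.inter_eq_singleton hlm hxl hxm] at h1
    simp only [hR.line_card, Set.ncard_singleton] at h1 h2
    omega
  obtain ⟨y, hy⟩ := Set.ncard_eq_one.1 (Set.ncard_compl_of_ncard_eq_add S (n := 1)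
    (by rw [hR.card_points, hS7]; rfl))
  exact ⟨y, fun z => by simpa [S] using (Set.ext_iff.1 hy z).not⟩

noncomputable def antipode (hR : IsAntipodalPlane 2 R) (x : P) : P :=
  (hR.exists_antipode x).choose

theorem exists_rel_rel_iff (hR : IsAntipodalPlane 2 R) {x z : P} :
    (∃ l, R x l ∧ R z l) ↔ z ≠ hR.antipode x :=
  (hR.exists_antipode x).choose_spec z

theorem ne_antipode_of_rel (hR : IsAntipodalPlane 2 R) {x z : P} {l : L} (hx : R x l)
    (hz : R z l) : z ≠ hR.antipode x :=
  hR.exists_rel_rel_iff.1 ⟨l, hx, hz⟩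

theorem not_rel_of_rel_antipode (hR : IsAntipodalPlane 2 R) {x : P} {l : L}
    (h : R (hR.antipode x) l) : ¬R x l :=
  fun hx => hR.ne_antipode_of_rel hx h rfl

theorem antipode_antipode (hR : IsAntipodalPlane 2 R) (x : P) :
    hR.antipode (hR.antipode x) = x := by
  by_contra h
  obtain ⟨l, hl, hx⟩ := hR.exists_rel_rel_iff.2 (Ne.symm h)
  exact hR.ne_antipode_of_rel hx hl rfl

theorem antipode_injective (hR : IsAntipodalPlane 2 R) : Function.Injective hR.antipode :=
  Function.LeftInverse.injective hR.antipode_antipode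

theorem antipode_ne_self (hR : IsAntipodalPlane 2 R) (x : P) : hR.antipode x ≠ x := by
  obtain ⟨l, hl⟩ := Set.nonempty_of_ncard_ne_zero (s := {l | R x l}) (by simp [hR.point_card])
  exact (hR.ne_antipode_of_rel hl hl).symm

theorem injective_labelling (hR : IsAntipodalPlane 2 R) {p a b c : P} {M : L} (ha : R a M)
    (hb : R b M) (hc : R c M) (hab : a ≠ b) (hac : a ≠ c) (hbc : b ≠ c) (hp : ¬R p M)
    (hp' : ¬R (hR.antipode p) M) :
    Function.Injective
      ![p, hR.antipode c, a, b, hR.antipode p, c, hR.antipode a, hR.antipode b] := by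
  have hM : ∀ x y, R x M → R y M → x ≠ hR.antipode y := fun _ _ hx hy => hR.ne_antipode_of_rel hy hx
  have hpM : ∀ x, R x M → x ≠ p := fun _ hx h => hp (h ▸ hx)
  have hp'M : ∀ x, R x M → x ≠ hR.antipode p := fun _ hx h => hp' (h ▸ hx)
  intro i j hij
  fin_cases i <;> fin_cases j <;>
    simp only [Fin.reduceFinMk, Fin.zero_eta, Fin.mk_one, Fin.isValue, cons_val, cons_val_zero,
      cons_val_one] at hij ⊢ <;>
    grind [hR.antipode_antipode, hR.antipode_injective.eq_iff, hR.antipode_ne_self]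

theorem rel_of_not_rel_of_not_rel (hR : IsAntipodalPlane 2 R) {x z : P} {l m n : L} (hlm : l ≠ m)
    (hln : l ≠ n) (hmn : m ≠ n) (hl : R x l) (hm : R x m) (hn : R x n) (hz : z ≠ hR.antipode x)
    (hzl : ¬R z l) (hzm : ¬R z m) : R z n := by
  obtain ⟨k, hxk, hzk⟩ := hR.exists_rel_rel_iff.2 hz
  rcases (hR.rel_iff_of_three_lines hlm hln hmn hl hm hn k).1 hxk with rfl | rfl | rfl
  exacts [absurd hzk hzl, absurd hzk hzm, hzk]

section Labelling

variable {f : Fin 8 → P}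

theorem exists_rel_rel_of_labelling (hR : IsAntipodalPlane 2 R) (hf : Function.Injective f)
    (hσf : ∀ i, hR.antipode (f i) = f (i + 4)) (i j : Fin 8) (h : j ≠ i + 4) :
    ∃ l, R (f i) l ∧ R (f j) l :=
  hR.exists_rel_rel_iff.2 (hσf i ▸ hf.ne h)

theorem not_rel_of_labelling (hR : IsAntipodalPlane 2 R)
    (hσf : ∀ i, hR.antipode (f i) = f (i + 4)) {i : Fin 8} {l : L} (h : R (f (i + 4)) l) :
    ¬R (f i) l :=
  hR.not_rel_of_rel_antipode (hσf i ▸ h)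

theorem not_rel_of_nodup (hR : IsAntipodalPlane 2 R) (hf : Function.Injective f) {l : L}
    {i j m k : Fin 8} (hi : R (f i) l) (hj : R (f j) l) (hm : R (f m) l)
    (hk : [k, i, j, m].Nodup) : ¬R (f k) l := by
  simp only [List.nodup_cons, List.mem_cons, List.not_mem_nil, or_false, not_or] at hk
  obtain ⟨⟨hki, hkj, hkm⟩, ⟨hij, him⟩, hjm, -⟩ := hk
  intro h
  rcases (hR.rel_iff_of_three_points (hf.ne hij) (hf.ne him) (hf.ne hjm) hi hj hm (f k)).1 h with
    h | h | h
  exacts [hki (hf h), hkj (hf h), hkm (hf h)]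

theorem rel_of_labelling (hR : IsAntipodalPlane 2 R) (hf : Function.Injective f)
    (hσf : ∀ i, hR.antipode (f i) = f (i + 4)) {i j : Fin 8} {l m n : L} (hlm : l ≠ m) (hln : l ≠ n)
    (hmn : m ≠ n) (hl : R (f i) l) (hm : R (f i) m) (hn : R (f i) n) (hj : j ≠ i + 4)
    (hjl : ¬R (f j) l) (hjm : ¬R (f j) m) : R (f j) n :=
  hR.rel_of_not_rel_of_not_rel hlm hln hmn hl hm hn (hσf i ▸ hf.ne hj) hjl hjm

theorem exists_lines_through_zero (hR : IsAntipodalPlane 2 R) (hf : Function.Injective f)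
    (hσf : ∀ i, hR.antipode (f i) = f (i + 4)) {M la : L} (h2M : R (f 2) M) (h3M : R (f 3) M)
    (h5M : R (f 5) M) (h0la : R (f 0) la) (h2la : R (f 2) la) (h7la : R (f 7) la) :
    (∃ l, R (f 0) l ∧ R (f 1) l ∧ R (f 3) l) ∧ ∃ l, R (f 5) l ∧ R (f 6) l ∧ R (f 0) l := by
  obtain ⟨lb, h0lb, h3lb⟩ := hR.exists_rel_rel_of_labelling hf hσf 0 3 (by decide)
  obtain ⟨lc, h0lc, h5lc⟩ := hR.exists_rel_rel_of_labelling hf hσf 0 5 (by decide)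
  have hlalb : la ≠ lb := by
    rintro rfl; exact hR.not_rel_of_nodup hf h0la h2la h7la (by decide) h3lb
  have hlalc : la ≠ lc := by
    rintro rfl; exact hR.not_rel_of_nodup hf h0la h2la h7la (by decide) h5lc
  have hlblc : lb ≠ lc := by
    rintro rfl
    refine hR.not_rel_of_nodup hf h2M h3M h5M (k := 0) (by decide) ?_
    exact hR.partial_linear _ _ (hf.ne (by decide)) _ _ h3lb h5lc h3M h5M ▸ h0lb
  have h1lb : R (f 1) lb := hR.rel_of_labelling hf hσf hlalc hlalb hlblc.symm h0la h0lc h0lb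
    (by decide) (hR.not_rel_of_nodup hf h0la h2la h7la (by decide))
    (hR.not_rel_of_labelling hσf h5lc)
  have h6lc : R (f 6) lc := hR.rel_of_labelling hf hσf hlalb hlalc hlblc h0la h0lb h0lc
    (by decide) (hR.not_rel_of_labelling hσf h2la)
    (hR.not_rel_of_nodup hf h0lb h1lb h3lb (by decide))
  exact ⟨⟨lb, h0lb, h1lb, h3lb⟩, lc, h5lc, h6lc, h0lc⟩

theorem exists_lines_through_four (hR : IsAntipodalPlane 2 R) (hf : Function.Injective f)
    (hσf : ∀ i, hR.antipode (f i) = f (i + 4)) {M la : L} (h2M : R (f 2) M) (h3M : R (f 3) M)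
    (h5M : R (f 5) M) (h0la : R (f 0) la) (h2la : R (f 2) la) (h7la : R (f 7) la) :
    (∃ l, R (f 1) l ∧ R (f 2) l ∧ R (f 4) l) ∧ (∃ l, R (f 3) l ∧ R (f 4) l ∧ R (f 6) l) ∧
      ∃ l, R (f 4) l ∧ R (f 5) l ∧ R (f 7) l := by
  obtain ⟨ma, h4ma, h2ma⟩ := hR.exists_rel_rel_of_labelling hf hσf 4 2 (by decide)
  obtain ⟨mb, h4mb, h3mb⟩ := hR.exists_rel_rel_of_labelling hf hσf 4 3 (by decide)
  obtain ⟨mc, h4mc, h5mc⟩ := hR.exists_rel_rel_of_labelling hf hσf 4 5 (by decide)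
  have hM : ∀ {l i j}, R (f i) l → R (f j) l → i ≠ j → R (f i) M → R (f j) M → ¬R (f 4) l :=
    fun hi hj hij hiM hjM h4 => hR.not_rel_of_nodup hf h2M h3M h5M (k := 4) (by decide)
      (hR.partial_linear _ _ (hf.ne hij) _ _ hi hj hiM hjM ▸ h4)
  have hmamb : ma ≠ mb := by rintro rfl; exact hM h2ma h3mb (by decide) h2M h3M h4ma
  have hmamc : ma ≠ mc := by rintro rfl; exact hM h2ma h5mc (by decide) h2M h5M h4ma
  have hmbmc : mb ≠ mc := by rintro rfl; exact hM h3mb h5mc (by decide) h3M h5M h4mb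
  have h7ma : ¬R (f 7) ma := fun h => hR.not_rel_of_nodup hf h0la h2la h7la (k := 4) (by decide)
    (hR.partial_linear _ _ (hf.ne (by decide)) _ _ h2ma h h2la h7la ▸ h4ma)
  have h7mc : R (f 7) mc := hR.rel_of_labelling hf hσf hmamb hmamc hmbmc h4ma h4mb h4mc
    (by decide) h7ma (hR.not_rel_of_labelling hσf h3mb)
  have h6mb : R (f 6) mb := hR.rel_of_labelling hf hσf hmamc hmamb hmbmc.symm h4ma h4mc h4mb
    (by decide) (hR.not_rel_of_labelling hσf h2ma)
    (hR.not_rel_of_nodup hf h4mc h5mc h7mc (by decide))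
  have h1ma : R (f 1) ma := hR.rel_of_labelling hf hσf hmbmc hmamb.symm hmamc.symm h4mb h4mc h4ma
    (by decide) (hR.not_rel_of_nodup hf h4mb h3mb h6mb (by decide))
    (hR.not_rel_of_labelling hσf h5mc)
  exact ⟨⟨ma, h1ma, h2ma, h4ma⟩, ⟨mb, h3mb, h4mb, h6mb⟩, mc, h4mc, h5mc, h7mc⟩

theorem exists_line_six (hR : IsAntipodalPlane 2 R) (hf : Function.Injective f)
    (hσf : ∀ i, hR.antipode (f i) = f (i + 4)) {lc mb : L} (h5lc : R (f 5) lc) (h6lc : R (f 6) lc)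
    (h0lc : R (f 0) lc) (h3mb : R (f 3) mb) (h4mb : R (f 4) mb) (h6mb : R (f 6) mb) :
    ∃ l, R (f 6) l ∧ R (f 7) l ∧ R (f 1) l := by
  obtain ⟨N, h6N, h7N⟩ := hR.exists_rel_rel_of_labelling hf hσf 6 7 (by decide)
  have hlcmb : lc ≠ mb := by
    rintro rfl; exact hR.not_rel_of_nodup hf h4mb h3mb h6mb (by decide) h0lc
  have hlcN : lc ≠ N := by rintro rfl; exact hR.not_rel_of_nodup hf h0lc h5lc h6lc (by decide) h7N
  have hmbN : mb ≠ N := by rintro rfl; exact hR.not_rel_of_labelling hσf h3mb h7N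
  exact ⟨N, h6N, h7N, hR.rel_of_labelling hf hσf hlcmb hlcN hmbN h6lc h6mb h6N (by decide)
    (hR.not_rel_of_labelling hσf h5lc) (hR.not_rel_of_nodup hf h4mb h3mb h6mb (by decide))⟩

theorem forall_exists_line_of_labelling (hR : IsAntipodalPlane 2 R) (hf : Function.Injective f)
    (hσf : ∀ i, hR.antipode (f i) = f (i + 4)) {M la : L} (h2M : R (f 2) M) (h3M : R (f 3) M)
    (h5M : R (f 5) M) (h0la : R (f 0) la) (h2la : R (f 2) la) (h7la : R (f 7) la) :
    ∀ j, ∃ l, R (f j) l ∧ R (f (j + 1)) l ∧ R (f (j + 3)) l := by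
  obtain ⟨hl0, lc, h5lc, h6lc, h0lc⟩ :=
    hR.exists_lines_through_zero hf hσf h2M h3M h5M h0la h2la h7la
  obtain ⟨hl1, ⟨mb, h3mb, h4mb, h6mb⟩, hl4⟩ :=
    hR.exists_lines_through_four hf hσf h2M h3M h5M h0la h2la h7la
  intro j
  fin_cases j
  exacts [hl0, hl1, ⟨M, h2M, h3M, h5M⟩, ⟨mb, h3mb, h4mb, h6mb⟩, hl4, ⟨lc, h5lc, h6lc, h0lc⟩,
    hR.exists_line_six hf hσf h5lc h6lc h0lc h3mb h4mb h6mb, ⟨la, h7la, h0la, h2la⟩]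

end Labelling

theorem exists_labelling_of_rel (hR : IsAntipodalPlane 2 R) {p a b c : P} {M la : L}
    (ha : R a M) (hb : R b M) (hc : R c M) (hab : a ≠ b) (hac : a ≠ c) (hbc : b ≠ c)
    (hp : ¬R p M) (hp' : ¬R (hR.antipode p) M) (hpla : R p la) (hala : R a la)
    (hbla : R (hR.antipode b) la) :
    ∃ f : Fin 8 → P, Function.Injective f ∧
      ∀ j, ∃ l, R (f j) l ∧ R (f (j + 1)) l ∧ R (f (j + 3)) l := by
  set f := ![p, hR.antipode c, a, b, hR.antipode p, c, hR.antipode a, hR.antipode b]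
  have hσf : ∀ i, hR.antipode (f i) = f (i + 4) := by
    intro i
    fin_cases i <;> simp [f, hR.antipode_antipode]
  have hf : Function.Injective f := hR.injective_labelling ha hb hc hab hac hbc hp hp'
  exact ⟨f, hf, hR.forall_exists_line_of_labelling hf hσf ha hb hc hpla hala hbla⟩

theorem exists_labelling (hR : IsAntipodalPlane 2 R) :
    ∃ f : Fin 8 → P, Function.Injective f ∧
      ∀ j, ∃ l, R (f j) l ∧ R (f (j + 1)) l ∧ R (f (j + 3)) l := by
  have hP : Nat.card P = 8 := hR.card_points
  have : Finite P := Nat.finite_of_card_ne_zero (by rw [hP]; norm_num)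
  obtain ⟨p⟩ : Nonempty P := (Nat.card_pos_iff.1 (by rw [hP]; norm_num)).1
  set σ := hR.antipode
  obtain ⟨a, -, hap, hap'⟩ := Set.exists_mem_ne_ne_of_two_lt_ncard
    (by rw [Set.ncard_univ, hP]; norm_num) p (σ p)
  obtain ⟨la, hpla, hala⟩ := hR.exists_rel_rel_iff.2 hap'
  obtain ⟨ma, hp'ma, hama⟩ := hR.exists_rel_rel_iff.2 (hR.antipode_antipode p ▸ hap)
  have hlama : la ≠ ma := by rintro rfl; exact hR.ne_antipode_of_rel hpla hp'ma rfl
  obtain ⟨M, haM, hMla, hMma⟩ := Set.exists_mem_ne_ne_of_two_lt_ncard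
    (by rw [hR.point_card a]; norm_num) la ma
  have hpM : ¬R p M := fun h => hMla (hR.partial_linear a p hap M la haM h hala hpla)
  have hp'M : ¬R (σ p) M := fun h => hMma (hR.partial_linear a _ hap' M ma haM h hama hp'ma)
  have h3M : 2 < {x | R x M}.ncard := by rw [hR.line_card M]; norm_num
  obtain ⟨b, hbM, hba, -⟩ := Set.exists_mem_ne_ne_of_two_lt_ncard h3M a a
  obtain ⟨c, hcM, hca, hcb⟩ := Set.exists_mem_ne_ne_of_two_lt_ncard h3M a b
  obtain ⟨t, htla, htp, hta⟩ := Set.exists_mem_ne_ne_of_two_lt_ncard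
    (by rw [hR.line_card la]; norm_num) p a
  have hf := hR.injective_labelling haM hbM hcM hba.symm hca.symm hcb.symm hpM hp'M
  obtain ⟨i, rfl⟩ := (hf.bijective_of_nat_card_le (by simp [hP])).2 t
  have hlaM : ∀ {x}, R x M → x ≠ a → ¬R x la := fun hxM hxa hxla =>
    hpM (hR.partial_linear _ _ hxa la M hxla hala hxM haM ▸ hpla)
  -- `t` is the antipode of `b` or of `c`; the two cases differ by exchanging `b` and `c`.
  fin_cases i
  · exact absurd rfl htp
  · exact hR.exists_labelling_of_rel haM hcM hbM hca.symm hba.symm hcb hpM hp'M hpla hala htla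
  · exact absurd rfl hta
  · exact absurd htla (hlaM hbM hba)
  · exact absurd rfl (hR.ne_antipode_of_rel hpla htla)
  · exact absurd htla (hlaM hcM hca)
  · exact absurd rfl (hR.ne_antipode_of_rel hala htla)
  · exact hR.exists_labelling_of_rel haM hbM hcM hba.symm hca.symm hcb.symm hpM hp'M hpla hala htla

end IsAntipodalPlane

theorem IsAntipodalPlane.hasEmbedding_moebiusKantor {P L : Type*} {R : P → L → Prop}
    (hR : IsAntipodalPlane 2 R) : HasEmbedding moebiusKantor R := by
  obtain ⟨f, hf, hl⟩ := hR.exists_labelling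
  choose g hg using hl
  have hj : ∀ j : Fin 8, j ≠ j + 1 ∧ j ≠ j + 3 ∧ j + 1 ≠ j + 3 := by decide
  refine isAntipodalPlane_moebiusKantor.hasEmbedding_of_forall_iff two_ne_zero f g fun i j => ?_
  obtain ⟨h0, h1, h3⟩ := hg j
  obtain ⟨h01, h03, h13⟩ := hj j
  rw [hR.rel_iff_of_three_points (hf.ne h01) (hf.ne h03) (hf.ne h13) h0 h1 h3, hf.eq_iff, hf.eq_iff,
    hf.eq_iff]
  rfl


section Coordinates

variable {F : Type*} [Field F]

theorem exists_root_of_det_moebiusKantor_of_standard (v : Fin 8 → Fin 3 → F)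
    (h0 : v 0 = Pi.single 0 1) (h2 : v 2 = Pi.single 1 1) (h4 : v 4 = Pi.single 2 1)
    (hcol : ∀ j, (of ![v j, v (j + 1), v (j + 3)]).det = 0)
    (hnc : ∀ z x y, x ≠ y → (∃ j, moebiusKantor x j ∧ moebiusKantor y j ∧ ¬moebiusKantor z j) →
      (of ![v z, v x, v y]).det ≠ 0) :
    ∃ c : F, c ^ 2 - c + 1 = 0 := by
  have e0 := hcol 0
  have e1 := hcol 1
  have e2 := hcol 2
  have e3 := hcol 3
  have e4 := hcol 4
  have e5 := hcol 5
  have e6 := hcol 6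
  have e7 := hcol 7
  have hC1 := hnc 4 0 1 (by decide) (by decide)
  have hb1 := hnc 4 0 3 (by decide) (by decide)
  have hc1 := hnc 4 0 5 (by decide) (by decide)
  have hB1 := hnc 4 0 7 (by decide) (by decide)
  have hA0 := hnc 6 2 4 (by decide) (by decide)
  have hA2 := hnc 6 0 2 (by decide) (by decide)
  simp only [Nat.succ_eq_add_one, Nat.reduceAdd, Fin.isValue, h0, h2, h4, zero_add, det_fin_three,
    of_apply, cons_val', Pi.single_eq_same, cons_val_fin_one, cons_val_zero, ne_eq, one_ne_zero,
    not_false_eq_true, Pi.single_eq_of_ne, cons_val_one, one_mul, Fin.reduceEq, cons_val, zero_mul,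
    sub_zero, add_zero, Fin.reduceAdd, zero_ne_one, mul_one, mul_zero, sub_self, zero_sub]
    at e0 e1 e2 e3 e4 e5 e6 e7 hC1 hb1 hc1 hB1 hA0 hA2
  simp only [e1, e7, mul_zero, zero_mul, sub_zero, add_zero] at e6
  set A := v 6
  set B := v 7
  set C := v 1
  set b := v 3
  set c := v 5
  -- In the frame where `A = (1, 1, 1)`, the point `c` is `(z, 1, 1)` with `z` the root we want.
  have E1 : A 0 * c 1 * C 2 - A 1 * c 0 * C 2 + A 2 * c 0 * C 1 = 0 := mul_left_cancel₀ hB1 (by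
    linear_combination c 1 * e6 + (A 2 * C 1 - A 1 * C 2) * e4)
  have E2 : A 0 * c 1 * b 2 - A 1 * c 0 * b 2 + A 2 * c 0 * b 1 = 0 := mul_left_cancel₀ hC1 (by
    linear_combination b 1 * E1 + (A 0 * c 1 - A 1 * c 0) * e0)
  have E3 : A 0 ^ 2 * c 1 * c 2 - A 0 * A 2 * c 0 * c 1 + A 1 * A 2 * c 0 ^ 2 = 0 :=
    mul_left_cancel₀ hb1 (by
      linear_combination A 1 * c 0 * E2 - (A 0 * A 1 * c 1 - A 1 ^ 2 * c 0) * e2 +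
        (A 0 * c 1 * c 2 - A 1 * c 0 * c 2) * e3 - A 0 * b 1 * c 0 * e5)
  have G : (A 1 * c 0) ^ 2 - (A 1 * c 0) * (A 0 * c 1) + (A 0 * c 1) ^ 2 = 0 :=
    mul_left_cancel₀ hA2 (by linear_combination A 1 * E3 + A 0 ^ 2 * c 1 * e5)
  refine ⟨A 1 * c 0 / (A 0 * c 1), ?_⟩
  field_simp
  linear_combination G

theorem det_of_vecMul (x y z : Fin 3 → F) (N : Matrix (Fin 3) (Fin 3) F) :
    (of ![x ᵥ* N, y ᵥ* N, z ᵥ* N]).det = (of ![x, y, z]).det * N.det := by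
  rw [← det_mul]
  congr 1
  ext i j
  fin_cases i <;> rfl

theorem exists_root_of_det_moebiusKantor (v : Fin 8 → Fin 3 → F)
    (hcol : ∀ j, (of ![v j, v (j + 1), v (j + 3)]).det = 0)
    (hnc : ∀ z x y, x ≠ y → (∃ j, moebiusKantor x j ∧ moebiusKantor y j ∧ ¬moebiusKantor z j) →
      (of ![v z, v x, v y]).det ≠ 0) :
    ∃ c : F, c ^ 2 - c + 1 = 0 := by
  set E := of ![v 0, v 2, v 4]
  have hE : E.det ≠ 0 := fun h => hnc 4 0 2 (by decide) (by decide) (by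
    simp only [E, det_fin_three, of_apply, cons_val] at h ⊢
    linear_combination h)
  have hE' : E⁻¹.det ≠ 0 := by
    rw [det_nonsing_inv, Ring.inverse_eq_inv']
    exact inv_ne_zero hE
  have hrow : ∀ i, E i ᵥ* E⁻¹ = Pi.single i 1 := fun i => by
    rw [← mul_apply_eq_vecMul, mul_nonsing_inv _ (isUnit_iff_ne_zero.2 hE)]
    ext k
    simp [one_apply, Pi.single_apply, eq_comm]
  refine exists_root_of_det_moebiusKantor_of_standard (fun i => v i ᵥ* E⁻¹) (hrow 0) (hrow 1)
    (hrow 2) (fun j => ?_) fun z x y hxy hj => ?_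
  · rw [det_of_vecMul, hcol, zero_mul]
  · rw [det_of_vecMul]
    exact mul_ne_zero (hnc z x y hxy hj) hE'

end Coordinates

section ProjectivePlane

open Module Submodule

variable {K : Type*} [Field K]

theorem Matrix.det_eq_zero_of_forall_mem {m : Type*} [Fintype m] [DecidableEq m]
    (M : Matrix m m K) {W : Submodule K (m → K)} (hW : finrank K W < Fintype.card m)
    (h : ∀ i, M i ∈ W) : M.det = 0 := by
  by_contra hM
  have hspan := finrank_span_eq_card (linearIndependent_rows_of_det_ne_zero hM)
  have hle : finrank K (span K (Set.range fun i => M i)) ≤ finrank K W :=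
    Submodule.finrank_mono (span_le.2 (Set.range_subset_iff.2 h))
  omega

theorem Matrix.det_ne_zero_of_notMem {W : Submodule K (Fin 3 → K)} {x y z : Fin 3 → K}
    (hx : x ∈ W) (hy : y ∈ W) (hz : z ∉ W) (hy0 : y ≠ 0) (hxy : x ∉ K ∙ y) :
    (of ![z, x, y]).det ≠ 0 := by
  rw [← isUnit_iff_ne_zero, ← isUnit_iff_isUnit_det, ← linearIndependent_rows_iff_isUnit]
  refine linearIndependent_finCons.2 ⟨linearIndependent_finCons.2 ⟨?_, ?_⟩, ?_⟩
  · simpa [linearIndependent_unique_iff] using hy0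
  · simpa using hxy
  · exact fun h => hz (span_le.2 (by simp [Set.insert_subset_iff, hx, hy]) h)

theorem PGPoint.exists_eq_span (X : PGPoint K) : ∃ v, v ≠ 0 ∧ X.1 = K ∙ v := by
  have hX : X.1 ≠ ⊥ := fun h => by
    have := X.2
    rw [h, finrank_bot] at this
    exact zero_ne_one this
  obtain ⟨v, hv, hv0⟩ := Submodule.exists_mem_ne_zero_of_ne_bot hX
  refine ⟨v, hv0, (eq_of_le_of_finrank_eq ((span_singleton_le_iff_mem v _).2 hv) ?_).symm⟩
  rw [finrank_span_singleton hv0, X.2]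

theorem exists_root_of_hasEmbedding_moebiusKantor
    (h : HasEmbedding moebiusKantor (PGIncidence K)) : ∃ c : K, c ^ 2 - c + 1 = 0 := by
  obtain ⟨φ, ψ, hφ, -, hiff⟩ := h
  choose v hv0 hv using fun i => (φ i).exists_eq_span
  have hmem : ∀ i j, moebiusKantor i j ↔ v i ∈ (ψ j).1 := fun i j => by
    rw [hiff, PGIncidence, hv, span_singleton_le_iff_mem]
  refine exists_root_of_det_moebiusKantor v (fun j => ?_) fun z x y hxy ⟨j, hx, hy, hz⟩ => ?_
  · refine det_eq_zero_of_forall_mem _ (W := (ψ j).1) (by simp [(ψ j).2]) fun k => ?_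
    fin_cases k
    exacts [(hmem _ _).1 (Or.inl rfl), (hmem _ _).1 (Or.inr (Or.inl rfl)),
      (hmem _ _).1 (Or.inr (Or.inr rfl))]
  · refine det_ne_zero_of_notMem ((hmem x j).1 hx) ((hmem y j).1 hy) (fun h => hz ((hmem z j).2 h))
      (hv0 y) fun h => hxy (hφ (Subtype.ext ?_))
    rw [hv x, hv y]
    refine eq_of_le_of_finrank_eq ((span_singleton_le_iff_mem _ _).2 h) ?_
    rw [finrank_span_singleton (hv0 x), finrank_span_singleton (hv0 y)]

end ProjectivePlane

section Construction

variable {K : Type*} [Field K]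

/-- With points `0, 2, 4, 6` at `(1, 0, 0), (0, 1, 0), (0, 0, 1), (1, 1, 1)`, these are the
coordinates forced by the incidences of `8₃`. -/
def moebiusKantorPoint (c : K) : Fin 8 → Fin 3 → K :=
  ![![1, 0, 0], ![0, 1, c], ![0, 1, 0], ![1, 1, c], ![0, 0, 1], ![1, c, c], ![1, 1, 1], ![1, c, 0]]

def moebiusKantorNormal (c : K) : Fin 8 → Fin 3 → K :=
  ![![0, c, -1], ![1, 0, 0], ![c, 0, -1], ![1, -1, 0], ![c, -1, 0], ![0, 1, -1], ![1 - c, c, -1],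
    ![0, 0, 1]]

theorem moebiusKantor_iff_dotProduct_eq_zero {c : K} (hc : c ^ 2 - c + 1 = 0) (i j : Fin 8) :
    moebiusKantor i j ↔ moebiusKantorNormal c j ⬝ᵥ moebiusKantorPoint c i = 0 := by
  fin_cases i <;> fin_cases j <;>
    simp only [moebiusKantor, moebiusKantorNormal, moebiusKantorPoint, dotProduct,
      Fin.sum_univ_three, Fin.reduceFinMk, Fin.zero_eta, Fin.mk_one, Fin.isValue, Fin.reduceAdd,
      cons_val', cons_val, cons_val_zero, cons_val_one, cons_val_fin_one] <;>
    grind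

open Module Submodule in
theorem hasEmbedding_moebiusKantor_of_root {c : K} (hc : c ^ 2 - c + 1 = 0) :
    HasEmbedding moebiusKantor (PGIncidence K) := by
  have hiff := moebiusKantor_iff_dotProduct_eq_zero hc
  have hoff : ∀ i, ∃ j, ¬moebiusKantor i j := by decide
  have hmiss : ∀ j, ∃ i, ¬moebiusKantor i j := by decide
  have hpt : ∀ i, moebiusKantorPoint c i ≠ 0 := fun i h => by
    obtain ⟨j, hj⟩ := hoff i
    exact hj ((hiff i j).2 (by simp [h]))
  have hnrm : ∀ j, dotProductEquiv K (Fin 3) (moebiusKantorNormal c j) ≠ 0 := fun j h => by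
    obtain ⟨i, hi⟩ := hmiss j
    exact hi ((hiff i j).2 (by simpa using LinearMap.congr_fun h (moebiusKantorPoint c i)))
  refine isAntipodalPlane_moebiusKantor.hasEmbedding_of_forall_iff two_ne_zero
    (fun i => ⟨K ∙ moebiusKantorPoint c i, finrank_span_singleton (hpt i)⟩)
    (fun j => ⟨LinearMap.ker (dotProductEquiv K (Fin 3) (moebiusKantorNormal c j)), ?_⟩)
    fun i j => ?_
  · have := Module.Dual.finrank_ker_add_one_of_ne_zero (hnrm j)
    simp only [finrank_fin_fun] at this
    omega
  · rw [hiff]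
    change _ ↔ K ∙ moebiusKantorPoint c i ≤ LinearMap.ker _
    rw [span_singleton_le_iff_mem, LinearMap.mem_ker, dotProductEquiv_apply_apply]

end Construction

section FiniteField

variable {F : Type*} [Field F] [Fintype F]

theorem three_eq_zero_iff_exists_card_eq_pow : (3 : F) = 0 ↔ ∃ n, Fintype.card F = 3 ^ n := by
  constructor
  · intro h
    have : CharP F 3 := (CharP.charP_iff_prime_eq_zero Nat.prime_three).2 (mod_cast h)
    obtain ⟨n, -, hn⟩ := FiniteField.card F 3
    exact ⟨n, hn⟩
  · rintro ⟨n, hn⟩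
    have hn0 : n ≠ 0 := by
      rintro rfl
      exact Fintype.one_lt_card.ne' (hn.trans (pow_zero 3))
    have h := FiniteField.cast_card_eq_zero F
    rw [hn, Nat.cast_pow, Nat.cast_ofNat] at h
    exact (pow_eq_zero_iff hn0).1 h

/-- Away from characteristic `3`, the roots of `X ^ 2 - X + 1` are the negatives of the cube roots
of unity other than `1`, that is, of the elements of order `3` in `Fˣ`. -/
theorem exists_sq_sub_self_add_one_eq_zero_iff :
    (∃ c : F, c ^ 2 - c + 1 = 0) ↔ (3 : F) = 0 ∨ 3 ∣ Fintype.card F - 1 := by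
  classical
  have : Fact (Nat.Prime 3) := ⟨Nat.prime_three⟩
  rw [← Fintype.card_units]
  constructor
  · rintro ⟨c, hc⟩
    refine or_iff_not_imp_left.2 fun h3 => ?_
    have hc0 : -c ≠ 0 := by rintro hc0; simp [neg_eq_zero.1 hc0] at hc
    have hu : orderOf (Units.mk0 (-c) hc0) = 3 := by
      refine orderOf_eq_prime (Units.ext ?_) fun h1 => h3 ?_
      · simp only [Units.val_pow_eq_pow_val, Units.val_mk0, Units.val_one]
        linear_combination (-c - 1) * hc
      · have : -c = 1 := congrArg Units.val h1
        linear_combination hc + (c - 2) * this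
    exact hu ▸ orderOf_dvd_card
  · rintro (h3 | h3)
    · exact ⟨-1, by linear_combination h3⟩
    · obtain ⟨u, hu⟩ := exists_prime_orderOf_dvd_card 3 h3
      have hu3 : (u : F) ^ 3 = 1 := by rw [← Units.val_pow_eq_pow_val, ← hu, pow_orderOf_eq_one,
        Units.val_one]
      have hu1 : (u : F) - 1 ≠ 0 := fun h => by
        rw [sub_eq_zero, ← Units.val_one, Units.val_inj] at h
        simp [h] at hu
      refine ⟨-u, mul_left_cancel₀ hu1 ?_⟩
      linear_combination hu3

end FiniteField

/-- An antipodal plane of order `2` embeds in `PG(2,q)` iff `q` is a power of `3`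
or `q ≡ 1 (mod 3)`. -/
theorem antipodal_order_two_embeds_iff (q : ℕ) (F : Type) [Field F] [Fintype F]
    (hF : Fintype.card F = q) :
    (∃ (P L : Type) (R : P → L → Prop),
        IsAntipodalPlane 2 R ∧ HasEmbedding R (PGIncidence F)) ↔
      (∃ h : ℕ, q = 3 ^ h) ∨ q % 3 = 1 := by
  have hq : 1 < q := hF ▸ Fintype.one_lt_card
  calc (∃ (P L : Type) (R : P → L → Prop), IsAntipodalPlane 2 R ∧ HasEmbedding R (PGIncidence F))
      ↔ ∃ c : F, c ^ 2 - c + 1 = 0 :=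
        ⟨fun ⟨_, _, _, hR, hE⟩ =>
          exists_root_of_hasEmbedding_moebiusKantor (hR.hasEmbedding_moebiusKantor.trans hE),
        fun ⟨_, hc⟩ => ⟨Fin 8, Fin 8, moebiusKantor, isAntipodalPlane_moebiusKantor,
          hasEmbedding_moebiusKantor_of_root hc⟩⟩
    _ ↔ (∃ h : ℕ, q = 3 ^ h) ∨ 3 ∣ q - 1 := by
      rw [exists_sq_sub_self_add_one_eq_zero_iff, three_eq_zero_iff_exists_card_eq_pow, hF]
    _ ↔ (∃ h : ℕ, q = 3 ^ h) ∨ q % 3 = 1 := or_congr Iff.rfl (by omega)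
end

section
/- Let p ≥ 3 be a prime, Π a finite projective plane of order p², and c a code word of C(Π)^⊥ of weight w(c) = 2p² − 2p + 2 + ε with 1 ≤ ε ≤ p − 2. Then the number of colours of c (i.e., the number of distinct nonzero values attained by c) is even. -/
/-- A projective plane of order `n`, given by an abstract incidence relation `R`. -/
structure IsProjectivePlaneOrder {P L : Type*} (n : ℕ) (R : P → L → Prop) : Prop where
  existsUnique_line : ∀ x y : P, x ≠ y → ∃! l : L, R x l ∧ R y l
  existsUnique_point : ∀ l m : L, l ≠ m → ∃! x : P, R x l ∧ R x m
  quadrangle : ∃ a b c d : P, a ≠ b ∧ a ≠ c ∧ a ≠ d ∧ b ≠ c ∧ b ≠ d ∧ c ≠ d ∧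
    ∀ l : L, ¬(R a l ∧ R b l ∧ R c l) ∧ ¬(R a l ∧ R b l ∧ R d l) ∧
      ¬(R a l ∧ R c l ∧ R d l) ∧ ¬(R b l ∧ R c l ∧ R d l)
  line_card : ∀ l : L, {x | R x l}.ncard = n + 1
  point_card : ∀ x : P, {l | R x l}.ncard = n + 1

/-- A code word of the dual code `C(Π)^⊥`: a function from points to `F_p` summing
to zero on every line. -/
def IsDualCodeWord {P L : Type*} (p : ℕ) (R : P → L → Prop) (c : P → ZMod p) : Prop :=
  ∀ l : L, ∑ᶠ x ∈ {y : P | R y l}, c x = 0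

/-! Through a point `P` of the support of `c` there are `p² + 1` lines, each meeting the support
again since the sum of `c` over it vanishes. As the weight is at most `2p² + 2`, one of these lines
meets the support in exactly `P` and one further point `Q`, and then `c Q = -c P`. So the set of
colours is closed under `a ↦ -a`, which has no fixed point on `𝔽_p^×` for odd `p`. -/

open Finset

theorem Set.Finite.even_ncard_of_neg_mem {G : Type*} [AddGroup G] {s : Set G} (hs : s.Finite)
    (hneg : ∀ a ∈ s, -a ∈ s) (hself : ∀ a ∈ s, -a ≠ a) : Even s.ncard := by
  rw [Set.ncard_eq_toFinset_card s hs, ← ZMod.natCast_eq_zero_iff_even, ← nsmul_one, ← sum_const]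
  exact sum_involution (fun a _ ↦ -a) (fun _ _ ↦ by decide)
    (fun a ha _ ↦ hself a (by simpa using ha))
    (fun a ha ↦ by simpa using hneg a (by simpa using ha)) (fun a _ ↦ neg_neg a)

theorem ZMod.neg_ne_self_of_odd {p : ℕ} (hp : Odd p) {a : ZMod p} (ha : a ≠ 0) : -a ≠ a := by
  rw [Ne, ZMod.neg_eq_self_iff, not_or]
  exact ⟨ha, fun h ↦ Nat.not_even_iff_odd.mpr hp ⟨a.val, by omega⟩⟩

theorem IsProjectivePlaneOrder.exists_line_inter_eq_pair {Pt Ln : Type*} [Finite Pt] [Finite Ln]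
    {n : ℕ} {R : Pt → Ln → Prop} (hPP : IsProjectivePlaneOrder n R) {s : Set Pt}
    (hs : s.ncard ≤ 2 * n + 2) {P : Pt} (hP : P ∈ s)
    (hline : ∀ l, R P l → ∃ Q ∈ s, Q ≠ P ∧ R Q l) :
    ∃ l Q, Q ≠ P ∧ {x | R x l} ∩ s = {P, Q} := by
  classical
  cases nonempty_fintype Pt
  cases nonempty_fintype Ln
  set lines : Finset Ln := {l | R P l}
  set others : Finset Pt := (s \ {P}).toFinset
  have h_lines : #lines = n + 1 := by
    rw [← hPP.point_card P, ← Set.ncard_coe_finset, coe_filter_univ]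
  have h_others : #others + 1 = s.ncard := by
    rw [← Set.ncard_coe_finset, Set.coe_toFinset, Set.ncard_sdiff_singleton_add_one hP]
  -- Each point of `s \ {P}` is on exactly one line through `P`; if all `n + 1` of these lines
  -- met `s \ {P}` twice, `s` would have at least `2n + 3` points.
  obtain ⟨l, hl, hlt⟩ : ∃ l ∈ lines, #(others.bipartiteBelow R l) < 2 := by
    by_contra! h
    have := card_mul_le_card_mul' R h (m := 1) fun Q hQ ↦ by
      refine card_le_one.mpr fun l hl m hm ↦ ?_
      simp only [bipartiteAbove, lines, mem_filter, mem_univ, true_and] at hl hm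
      have hQP : Q ≠ P := (by simpa [others] using hQ : Q ∈ s ∧ Q ≠ P).2
      exact (hPP.existsUnique_line Q P hQP).unique ⟨hl.2, hl.1⟩ ⟨hm.2, hm.1⟩
    omega
  have hl : R P l := by simpa [lines] using hl
  obtain ⟨Q, hQ⟩ : ∃ Q, others.bipartiteBelow R l = {Q} := by
    obtain ⟨Q, hQs, hQP, hQl⟩ := hline l hl
    refine card_eq_one.mp (le_antisymm (by omega) (card_pos.mpr ⟨Q, ?_⟩))
    simp [bipartiteBelow, others, hQs, hQP, hQl]
  have hmem : ∀ x, x ≠ P → (R x l ∧ x ∈ s ↔ x = Q) := fun x hxP ↦ by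
    simpa [bipartiteBelow, others, hxP, and_comm] using Finset.ext_iff.mp hQ x
  refine ⟨l, Q, fun hQP ↦ ?_, Set.ext fun x ↦ ?_⟩
  · simpa [bipartiteBelow, others, hQP] using hQ.ge (mem_singleton_self Q)
  by_cases hxP : x = P
  · simp [hxP, hl, hP]
  · simp [hxP, hmem x hxP]

namespace IsDualCodeWord

variable {Pt Ln : Type*} {p : ℕ} {R : Pt → Ln → Prop} {c : Pt → ZMod p}

theorem exists_ne_mem_support_of_rel (hc : IsDualCodeWord p R c) {P : Pt} (hP : c P ≠ 0)
    {l : Ln} (hl : R P l) : ∃ Q ∈ Function.support c, Q ≠ P ∧ R Q l := by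
  by_contra! h
  have hinter : {x | R x l} ∩ Function.support c = {P} :=
    Set.ext fun x ↦ ⟨fun ⟨hxl, hx⟩ ↦ by_contra fun hxP ↦ h x hx hxP hxl,
      by rintro rfl; exact ⟨hl, hP⟩⟩
  have := hc l
  rw [← finsum_mem_inter_support, hinter, finsum_mem_singleton] at this
  exact hP this

theorem add_eq_zero_of_inter_support_eq_pair (hc : IsDualCodeWord p R c) {l : Ln} {P Q : Pt}
    (hPQ : P ≠ Q) (h : {x | R x l} ∩ Function.support c = {P, Q}) : c P + c Q = 0 := by
  rw [← finsum_mem_pair hPQ, ← h, finsum_mem_inter_support]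
  exact hc l

theorem exists_eq_neg [Finite Pt] [Finite Ln] {n : ℕ} (hPP : IsProjectivePlaneOrder n R)
    (hc : IsDualCodeWord p R c) (hw : (Function.support c).ncard ≤ 2 * n + 2) {P : Pt}
    (hP : c P ≠ 0) : ∃ Q, c Q = -c P := by
  obtain ⟨l, Q, hQP, hl⟩ := hPP.exists_line_inter_eq_pair hw hP
    fun l hl ↦ hc.exists_ne_mem_support_of_rel hP hl
  exact ⟨Q, eq_neg_of_add_eq_zero_right (hc.add_eq_zero_of_inter_support_eq_pair hQP.symm hl)⟩

end IsDualCodeWord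

theorem card_colours_even_general {Pt Ln : Type} [Finite Pt] [Finite Ln]
    (p : ℕ) (hp : p.Prime) (hp3 : 3 ≤ p)
    (R : Pt → Ln → Prop) (hPP : IsProjectivePlaneOrder (p ^ 2) R)
    (c : Pt → ZMod p) (hc : IsDualCodeWord p R c)
    (ε : ℕ) (hε2 : ε ≤ p - 2)
    (hw : (Function.support c).ncard = 2 * p ^ 2 - 2 * p + 2 + ε) :
    Even ((Set.range c \ {0}).ncard) := by
  have hw_le : (Function.support c).ncard ≤ 2 * p ^ 2 + 2 := by
    have : p ≤ p ^ 2 := Nat.le_self_pow two_ne_zero p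
    omega
  have hodd : Odd p := hp.odd_of_ne_two (by omega)
  refine (Set.finite_range c).sdiff.even_ncard_of_neg_mem ?_
    fun a ha ↦ ZMod.neg_ne_self_of_odd hodd ha.2
  rintro _ ⟨⟨P, rfl⟩, hP⟩
  obtain ⟨Q, hQ⟩ := hc.exists_eq_neg hPP hw_le hP
  exact ⟨⟨Q, hQ⟩, neg_ne_zero.mpr hP⟩

/-- The number of distinct nonzero values of a code word of weight
`2p² - 2p + 2 + ε`, `1 ≤ ε ≤ p - 2`, is even. -/
theorem card_colours_even {Pt Ln : Type} [Finite Pt] [Finite Ln]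
    (p : ℕ) (hp : p.Prime) (hp3 : 3 ≤ p)
    (R : Pt → Ln → Prop) (hPP : IsProjectivePlaneOrder (p ^ 2) R)
    (c : Pt → ZMod p) (hc : IsDualCodeWord p R c)
    (ε : ℕ) (hε1 : 1 ≤ ε) (hε2 : ε ≤ p - 2)
    (hw : (Function.support c).ncard = 2 * p ^ 2 - 2 * p + 2 + ε) :
    Even ((Set.range c \ {0}).ncard) :=
  card_colours_even_general p hp hp3 R hPP c hc ε hε2 hw
end

section
/- Let p ≥ 3 be a prime, Π a finite projective plane of order p², and c a code word of C(Π)^⊥ of weight w(c) = 2p² − 2p + 2 + ε with 1 ≤ ε ≤ p − 2, and suppose the value 1 ∈ F_p occurs among the values of c. Then |μ(c) − μ(−c)| ≤ εp ≤ p² − 2p. -/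
open Finset in
lemma aux_mu_lower {Pt Ln : Type} [Fintype Pt] [Fintype Ln] [DecidableEq Pt] {p n : ℕ} (hp : p.Prime)
    {R : Pt → Ln → Prop} [∀ x l, Decidable (R x l)]
    (hUL : ∀ x y : Pt, x ≠ y → ∃! l : Ln, R x l ∧ R y l)
    (hpc : ∀ x : Pt, (univ.filter (fun l => R x l)).card = n + 1)
    {c : Pt → ZMod p} (hc : ∀ l : Ln, ∑ x ∈ univ.filter (fun y => R y l), c x = 0)
    {Q : Pt} (hQ : c Q = 1) :
    p * (n + 1) ≤ (∑ x, (c x).val) + n := by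
  haveI : Fact (1 < p) := ⟨hp.one_lt⟩
  haveI : NeZero p := ⟨hp.pos.ne'⟩
  set v : Pt → ℕ := fun x => (c x).val with hv
  set LQ : Finset Ln := univ.filter (fun l => R Q l) with hLQ
  have hvQ : v Q = 1 := by simp [hv, hQ, ZMod.val_one]
  -- each line sum is at least p
  have hSl : ∀ l ∈ LQ, p ≤ ∑ x ∈ univ.filter (fun y => R y l), v x := by
    intro l hl
    have hdvd : p ∣ ∑ x ∈ univ.filter (fun y => R y l), v x := by
      have hcast : ((∑ x ∈ univ.filter (fun y => R y l), v x : ℕ) : ZMod p) = 0 := by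
        push_cast
        simpa [hv, ZMod.natCast_val, ZMod.cast_id] using hc l
      exact (ZMod.natCast_eq_zero_iff _ _).mp hcast
    have hQl : Q ∈ univ.filter (fun y => R y l) := by
      simp only [hLQ, mem_filter, mem_univ, true_and] at hl ⊢
      exact hl
    have hpos : 0 < ∑ x ∈ univ.filter (fun y => R y l), v x :=
      lt_of_lt_of_le (by omega : 0 < 1)
        (hvQ ▸ Finset.single_le_sum (fun _ _ => Nat.zero_le _) hQl)
    exact Nat.le_of_dvd hpos hdvd
  -- double counting
  have hcard1 : ∀ x : Pt, x ≠ Q → (LQ.filter (fun l => R x l)).card = 1 := by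
    intro x hx
    obtain ⟨l₀, ⟨hx0, hQ0⟩, huniq⟩ := hUL x Q hx
    rw [Finset.card_eq_one]
    refine ⟨l₀, ?_⟩
    ext l
    simp only [hLQ, Finset.mem_filter, Finset.mem_univ, true_and, Finset.mem_singleton]
    constructor
    · rintro ⟨hQl, hxl⟩; exact huniq l ⟨hxl, hQl⟩
    · rintro rfl; exact ⟨hQ0, hx0⟩
  have hcardQ : (LQ.filter (fun l => R Q l)).card = n + 1 := by
    rw [Finset.filter_true_of_mem (fun l hl => (Finset.mem_filter.mp hl).2), hpc Q]
  have hcount : ∑ l ∈ LQ, ∑ x ∈ univ.filter (fun y => R y l), v x = (∑ x, v x) + n := by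
    have e1 : ∀ l : Ln, ∑ x ∈ univ.filter (fun y => R y l), v x
        = ∑ x : Pt, if R x l then v x else 0 := fun l => (Finset.sum_filter _ _)
    calc ∑ l ∈ LQ, ∑ x ∈ univ.filter (fun y => R y l), v x
        = ∑ l ∈ LQ, ∑ x : Pt, if R x l then v x else 0 := by
          exact Finset.sum_congr rfl fun l _ => e1 l
      _ = ∑ x : Pt, ∑ l ∈ LQ, if R x l then v x else 0 := Finset.sum_comm
      _ = ∑ x : Pt, (LQ.filter (fun l => R x l)).card * v x := by
          refine Finset.sum_congr rfl fun x _ => ?_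
          rw [← Finset.sum_filter, Finset.sum_const, smul_eq_mul]
      _ = (LQ.filter (fun l => R Q l)).card * v Q
            + ∑ x ∈ univ.erase Q, (LQ.filter (fun l => R x l)).card * v x :=
          (Finset.add_sum_erase _ _ (Finset.mem_univ Q)).symm
      _ = (n + 1) + ∑ x ∈ univ.erase Q, v x := by
          rw [hcardQ, hvQ, mul_one]
          congr 1
          refine Finset.sum_congr rfl fun x hx => ?_
          rw [hcard1 x (Finset.mem_erase.mp hx).1, one_mul]
      _ = (∑ x, v x) + n := by
          have : ∑ x, v x = v Q + ∑ x ∈ univ.erase Q, v x :=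
            (Finset.add_sum_erase _ _ (Finset.mem_univ Q)).symm
          rw [this, hvQ]; omega
  calc p * (n + 1) = ∑ _l ∈ LQ, p := by rw [Finset.sum_const, hpc Q, smul_eq_mul, mul_comm]
    _ ≤ ∑ l ∈ LQ, ∑ x ∈ univ.filter (fun y => R y l), v x := Finset.sum_le_sum hSl
    _ = (∑ x, v x) + n := hcount


open Finset in
lemma aux_neg_one {Pt Ln : Type} [Fintype Pt] [Fintype Ln] [DecidableEq Pt] [DecidableEq Ln]
    {p n : ℕ} (hp : p.Prime)
    {R : Pt → Ln → Prop} [∀ x l, Decidable (R x l)]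
    (hUL : ∀ x y : Pt, x ≠ y → ∃! l : Ln, R x l ∧ R y l)
    (hpc : ∀ x : Pt, (univ.filter (fun l => R x l)).card = n + 1)
    {c : Pt → ZMod p} (hc : ∀ l : Ln, ∑ x ∈ univ.filter (fun y => R y l), c x = 0)
    {Q : Pt} (hQ : c Q = 1)
    (hno : ∀ y : Pt, c y ≠ -1) :
    2 * (n + 1) + 1 ≤ (univ.filter (fun x => c x ≠ 0)).card := by
  haveI : Fact (1 < p) := ⟨hp.one_lt⟩
  haveI : NeZero p := ⟨hp.pos.ne'⟩
  set LQ : Finset Ln := univ.filter (fun l => R Q l) with hLQ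
  set T : Ln → Finset Pt :=
    fun l => ((univ.filter (fun y => R y l)).erase Q).filter (fun x => c x ≠ 0) with hT
  have hTsum : ∀ l ∈ LQ, ∑ x ∈ T l, c x = -1 := by
    intro l hl
    have hQl : Q ∈ univ.filter (fun y => R y l) := by
      simp only [hLQ, mem_filter, mem_univ, true_and] at hl ⊢; exact hl
    have h0 := hc l
    rw [← Finset.add_sum_erase _ _ hQl, hQ] at h0
    have h1 : ∑ x ∈ (univ.filter (fun y => R y l)).erase Q, c x = -1 := by
      linear_combination h0
    rw [hT]
    rw [Finset.sum_filter_ne_zero]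
    exact h1
  have hT2 : ∀ l ∈ LQ, 2 ≤ (T l).card := by
    intro l hl
    by_contra hlt
    push_neg at hlt
    interval_cases h : (T l).card
    · have hE : T l = ∅ := Finset.card_eq_zero.mp h
      have hs := hTsum l hl
      rw [hE, Finset.sum_empty] at hs
      exact one_ne_zero (neg_eq_zero.mp hs.symm)
    · obtain ⟨y, hy⟩ := Finset.card_eq_one.mp h
      have := hTsum l hl
      rw [hy, Finset.sum_singleton] at this
      exact hno y this
  have hdisj : ∀ l ∈ LQ, ∀ l' ∈ LQ, l ≠ l' → Disjoint (T l) (T l') := by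
    intro l hl l' hl' hne
    rw [Finset.disjoint_left]
    intro x hx hx'
    simp only [hT, Finset.mem_filter, Finset.mem_erase, Finset.mem_univ, true_and] at hx hx'
    simp only [hLQ, Finset.mem_filter, Finset.mem_univ, true_and] at hl hl'
    obtain ⟨l₀, _, huniq⟩ := hUL x Q hx.1.1
    exact hne ((huniq l ⟨hx.1.2, hl⟩).trans (huniq l' ⟨hx'.1.2, hl'⟩).symm)
  have hsub : LQ.biUnion T ⊆ (univ.filter (fun x => c x ≠ 0)).erase Q := by
    intro x hx
    obtain ⟨l, _, hxl⟩ := Finset.mem_biUnion.mp hx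
    simp only [hT, Finset.mem_filter, Finset.mem_erase, Finset.mem_univ, true_and] at hxl ⊢
    exact ⟨hxl.1.1, hxl.2⟩
  have hQS : Q ∈ univ.filter (fun x => c x ≠ 0) := by
    simp [hQ]
  have hbig : 2 * (n + 1) ≤ (LQ.biUnion T).card := by
    rw [Finset.card_biUnion hdisj]
    calc 2 * (n + 1) = ∑ _l ∈ LQ, 2 := by rw [Finset.sum_const, hLQ, hpc Q, smul_eq_mul, mul_comm]
      _ ≤ ∑ l ∈ LQ, (T l).card := Finset.sum_le_sum hT2
  have hle := Finset.card_le_card hsub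
  rw [Finset.card_erase_of_mem hQS] at hle
  have hpos : 1 ≤ (univ.filter (fun x => c x ≠ 0)).card := Finset.card_pos.mpr ⟨Q, hQS⟩
  omega


/-- `μ(c)`: the sum, as a natural number, of the representatives in `{0, ..., p-1}`
of the values of `c`. -/
noncomputable def mu {P : Type*} {p : ℕ} (c : P → ZMod p) : ℕ :=
  ∑ᶠ x : P, (c x).val

open Finset

/-- If the value `1` occurs in a code word `c` of weight `2p² - 2p + 2 + ε`,
`1 ≤ ε ≤ p - 2`, then `|μ(c) - μ(-c)| ≤ εp ≤ p² - 2p`. -/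
theorem mu_difference_bound {Pt Ln : Type} [Finite Pt] [Finite Ln]
    (p : ℕ) (hp : p.Prime) (hp3 : 3 ≤ p)
    (R : Pt → Ln → Prop) (hPP : IsProjectivePlaneOrder (p ^ 2) R)
    (c : Pt → ZMod p) (hc : IsDualCodeWord p R c)
    (ε : ℕ) (hε1 : 1 ≤ ε) (hε2 : ε ≤ p - 2)
    (hw : (Function.support c).ncard = 2 * p ^ 2 - 2 * p + 2 + ε)
    (h1 : (1 : ZMod p) ∈ Set.range c) :
    ((mu c : ℤ) - (mu (-c) : ℤ)).natAbs ≤ ε * p ∧ ε * p ≤ p ^ 2 - 2 * p := by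
  classical
  letI : Fintype Pt := Fintype.ofFinite Pt
  letI : Fintype Ln := Fintype.ofFinite Ln
  haveI : Fact (1 < p) := ⟨hp.one_lt⟩
  haveI : NeZero p := ⟨hp.pos.ne'⟩
  -- translate hypotheses to Finset form
  have hc' : ∀ l : Ln, ∑ x ∈ univ.filter (fun y => R y l), c x = 0 := by
    intro l
    have := hc l
    rwa [show {y : Pt | R y l} = ↑(univ.filter (fun y => R y l)) by ext; simp,
      finsum_mem_coe_finset] at this
  have hcneg : ∀ l : Ln, ∑ x ∈ univ.filter (fun y => R y l), (-c) x = 0 := by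
    intro l
    simp only [Pi.neg_apply, Finset.sum_neg_distrib, hc' l, neg_zero]
  have hpc' : ∀ x : Pt, (univ.filter (fun l => R x l)).card = p ^ 2 + 1 := by
    intro x
    have := hPP.point_card x
    rwa [show {l : Ln | R x l} = ↑(univ.filter (fun l => R x l)) by ext; simp,
      Set.ncard_coe_finset] at this
  have hw' : (univ.filter (fun x => c x ≠ 0)).card = 2 * p ^ 2 - 2 * p + 2 + ε := by
    rw [← hw, show Function.support c = ↑(univ.filter (fun x => c x ≠ 0)) by
      ext; simp [Function.mem_support], Set.ncard_coe_finset]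
  obtain ⟨Q, hQ⟩ := h1
  -- lower bound for mu c
  have hA := aux_mu_lower hp hPP.existsUnique_line hpc' hc' hQ
  -- -1 is in the range of c
  have hneg : ∃ y : Pt, c y = -1 := by
    by_contra hno
    push_neg at hno
    have hkey := aux_neg_one hp hPP.existsUnique_line hpc' hc' hQ hno
    rw [hw'] at hkey
    have hpp : p ^ 2 = p * p := sq p
    have h2p : 2 * p ≤ p * p := by nlinarith
    obtain ⟨m, hm⟩ : ∃ m, p * p = m := ⟨_, rfl⟩
    rw [hpp, hm] at hkey
    omega
  obtain ⟨Q', hQ'⟩ := hneg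
  have hB := aux_mu_lower hp hPP.existsUnique_line hpc' hcneg (show (-c) Q' = 1 by simp [hQ'])
  -- sum identity
  have hsum : (∑ x, (c x).val) + (∑ x, ((-c) x).val) = p * (2 * p ^ 2 - 2 * p + 2 + ε) := by
    rw [← hw', ← Finset.sum_add_distrib]
    have hpt : ∀ x : Pt, (c x).val + ((-c) x).val = if c x ≠ 0 then p else 0 := by
      intro x
      by_cases h : c x = 0
      · simp [h]
      · simp only [h, ne_eq, not_false_eq_true, if_true]
        have h1' : ((-c) x).val = p - (c x).val := by
          rw [Pi.neg_apply, ZMod.neg_val, if_neg h]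
        have h2' : 0 < (c x).val := Nat.pos_of_ne_zero fun hzz => h (by
          rwa [ZMod.val_eq_zero] at hzz)
        have h3' : (c x).val < p := ZMod.val_lt _
        omega
    rw [Finset.sum_congr rfl (fun x _ => hpt x), ← Finset.sum_filter,
      Finset.sum_const, smul_eq_mul, mul_comm]
  -- convert finsums
  have hmu1 : mu c = ∑ x, (c x).val := finsum_eq_sum_of_fintype _
  have hmu2 : mu (-c) = ∑ x, ((-c) x).val := finsum_eq_sum_of_fintype _
  rw [hmu1, hmu2]
  -- final arithmetic
  have h2p : 2 * p ≤ 2 * p ^ 2 := by nlinarith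
  constructor
  · set A := ∑ x, (c x).val
    set B := ∑ x, ((-c) x).val
    have hAz : (p : ℤ) * (p ^ 2 + 1) ≤ (A : ℤ) + p ^ 2 := by exact_mod_cast hA
    have hBz : (p : ℤ) * (p ^ 2 + 1) ≤ (B : ℤ) + p ^ 2 := by exact_mod_cast hB
    have hABz : (A : ℤ) + B = p * (2 * p ^ 2 - 2 * p + 2 + ε) := by
      have h := hsum
      zify [h2p] at h
      linarith [h]
    obtain ⟨k, hk⟩ : ∃ k : ℕ, ε * p = k := ⟨_, rfl⟩
    have hkz : ((k : ℕ) : ℤ) = (ε : ℤ) * p := by rw [← hk]; push_cast; ring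
    have hub : (A : ℤ) - B ≤ (k : ℤ) := by rw [hkz]; nlinarith
    have hlb : -(k : ℤ) ≤ (A : ℤ) - B := by rw [hkz]; nlinarith
    rw [hk]
    omega
  · calc ε * p ≤ (p - 2) * p := Nat.mul_le_mul_right p hε2
      _ = p ^ 2 - 2 * p := by rw [Nat.sub_mul, ← pow_two]
end

section
/- Let p ≥ 3 be a prime, Π a finite projective plane of order p², and c a code word of C(Π)^⊥ of weight w(c) = 2p² − 2p + 2 + ε with 1 ≤ ε ≤ p − 2, and suppose c takes no values outside {0, 1, p−1}. Then the absolute difference ||K₁| − |K_{p−1}|| equals 0 or p; moreover, if ||K₁| − |K_{p−1}|| = p, then ε = p − 2. -/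
set_option maxHeartbeats 1000000 in
open Finset in
lemma two_colour_aux {Pt Ln : Type} [Finite Pt] [Finite Ln]
    (p : ℕ) (hp : p.Prime) (hp3 : 3 ≤ p)
    (R : Pt → Ln → Prop) (hPP : IsProjectivePlaneOrder (p ^ 2) R)
    (c : Pt → ZMod p) (hc : IsDualCodeWord p R c)
    (ε : ℕ) (hε2 : ε ≤ p - 2)
    (hw : (Function.support c).ncard = 2 * p ^ 2 - 2 * p + 2 + ε)
    (hval : ∀ x : Pt, c x = 0 ∨ c x = 1 ∨ c x = -1)
    (hab : ({x | c x = -1} : Set Pt).ncard < ({x | c x = 1} : Set Pt).ncard) :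
    (({x | c x = 1} : Set Pt).ncard : ℤ) - ({x | c x = -1} : Set Pt).ncard = p ∧ ε = p - 2 := by
  classical
  haveI := Fintype.ofFinite Pt
  haveI := Fintype.ofFinite Ln
  haveI : Fact (1 < p) := ⟨hp.one_lt⟩
  have hp3' : (3 : ℤ) ≤ (p : ℤ) := by exact_mod_cast hp3
  -- basic facts about ZMod p
  have hne : (1 : ZMod p) ≠ -1 := by
    intro h
    have h2 : ((2 : ℕ) : ZMod p) = 0 := by push_cast; linear_combination h
    have hd := (ZMod.natCast_eq_zero_iff 2 p).mp h2
    have := Nat.le_of_dvd (by norm_num) hd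
    omega
  have hne' : (-1 : ZMod p) ≠ 1 := Ne.symm hne
  have h10 : (1 : ZMod p) ≠ 0 := one_ne_zero
  have hm10 : (-1 : ZMod p) ≠ 0 := neg_ne_zero.mpr one_ne_zero
  -- integer-valued versions of the codeword
  set f : Pt → ℤ := fun x => (if c x = 1 then 1 else 0) - (if c x = -1 then 1 else 0) with hf
  set g : Pt → ℤ := fun x => (if c x = 1 then 1 else 0) + (if c x = -1 then 1 else 0) with hg
  have hfc : ∀ x, ((f x : ℤ) : ZMod p) = c x := by
    intro x
    rcases hval x with h | h | h <;>
      simp [hf, h, hne, hne', h10, hm10, Ne.symm h10, Ne.symm hm10]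
  have habsfg : ∀ x, |f x| ≤ g x := by
    intro x
    by_cases h1 : c x = 1 <;> by_cases h2 : c x = -1 <;> simp [hf, hg, h1, h2, hne, hne'] <;> norm_num
  have hfgpar : ∀ x, 2 ∣ g x - f x := by
    intro x
    refine ⟨if c x = -1 then 1 else 0, ?_⟩
    simp only [hf, hg]; ring
  have hgnonneg : ∀ x, 0 ≤ g x := by
    intro x
    by_cases h1 : c x = 1 <;> by_cases h2 : c x = -1 <;> simp [hg, h1, h2, hne, hne'] <;> norm_num
  -- finsets of points
  set A : Finset Pt := univ.filter (fun x => c x = 1) with hA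
  set B : Finset Pt := univ.filter (fun x => c x = -1) with hB
  set S : Finset Pt := univ.filter (fun x => c x ≠ 0) with hS
  have haA : ({x | c x = 1} : Set Pt).ncard = A.card := by
    rw [Set.ncard_eq_toFinset_card']
    congr 1
    ext x
    simp [hA]
  have hbB : ({x | c x = -1} : Set Pt).ncard = B.card := by
    rw [Set.ncard_eq_toFinset_card']
    congr 1
    ext x
    simp [hB]
  have hwS : S.card = 2 * p ^ 2 - 2 * p + 2 + ε := by
    rw [← hw, Set.ncard_eq_toFinset_card']
    congr 1
    ext x
    simp [hS, Function.mem_support]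
  have hABS : A.card + B.card = S.card := by
    rw [← Finset.card_union_of_disjoint]
    · congr 1
      ext x
      simp only [hA, hB, hS, Finset.mem_union, Finset.mem_filter, Finset.mem_univ, true_and]
      constructor
      · rintro (h | h) <;> rw [h] <;> [exact h10; exact hm10]
      · intro h
        rcases hval x with h0 | h0 | h0
        · exact absurd h0 h
        · exact Or.inl h0
        · exact Or.inr h0
    · rw [Finset.disjoint_left]
      intro x hx hx'
      rw [hA, Finset.mem_filter] at hx
      rw [hB, Finset.mem_filter] at hx'
      exact hne (hx.2.symm.trans hx'.2)
  -- total sums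
  have hsumf : ∑ x, f x = (A.card : ℤ) - B.card := by
    simp only [hf, Finset.sum_sub_distrib, Finset.sum_boole, hA, hB]
  have hsumg : ∑ x, g x = (A.card : ℤ) + B.card := by
    simp only [hg, Finset.sum_add_distrib, Finset.sum_boole, hA, hB]
  -- per-line facts
  set pts : Ln → Finset Pt := fun ℓ => univ.filter (fun x => R x ℓ) with hpts
  have hline : ∀ ℓ : Ln, ∑ x ∈ pts ℓ, c x = 0 := by
    intro ℓ
    have h0 := hc ℓ
    rwa [show {y : Pt | R y ℓ} = (↑(pts ℓ) : Set Pt) by ext x; simp [hpts],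
      finsum_mem_coe_finset] at h0
  have hdvd : ∀ ℓ : Ln, (p : ℤ) ∣ ∑ x ∈ pts ℓ, f x := by
    intro ℓ
    have h0 : ((∑ x ∈ pts ℓ, f x : ℤ) : ZMod p) = 0 := by
      push_cast
      rw [Finset.sum_congr rfl (fun x _ => hfc x)]
      exact hline ℓ
    exact (ZMod.intCast_zmod_eq_zero_iff_dvd _ p).mp h0
  set m : Ln → ℤ := fun ℓ => (∑ x ∈ pts ℓ, f x) / p with hmdef
  have hm : ∀ ℓ, ∑ x ∈ pts ℓ, f x = p * m ℓ :=
    fun ℓ => (Int.mul_ediv_cancel' (hdvd ℓ)).symm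
  -- pick a point with value 1
  have hApos : 0 < A.card := by
    rw [haA, hbB] at hab; omega
  obtain ⟨P, hPA⟩ := Finset.card_pos.mp hApos
  have hcP : c P = 1 := by
    rw [hA, Finset.mem_filter] at hPA; exact hPA.2
  have hgP : g P = 1 := by simp [hg, hcP, hne]
  -- the pencil of lines through P
  set Λ : Finset Ln := univ.filter (fun ℓ => R P ℓ) with hΛ
  have hΛcard : Λ.card = p ^ 2 + 1 := by
    have h0 := hPP.point_card P
    rw [Set.ncard_eq_toFinset_card'] at h0
    rw [hΛ, ← h0]
    congr 1
    ext ℓ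
    simp
  -- double counting over the pencil
  have hcount : ∀ h : Pt → ℤ, ∑ ℓ ∈ Λ, ∑ x ∈ pts ℓ, h x
      = (∑ x, h x) + (p ^ 2 : ℤ) * h P := by
    intro h
    have step1 : ∑ ℓ ∈ Λ, ∑ x ∈ pts ℓ, h x
        = ∑ x, ((Λ.filter (fun ℓ => R x ℓ)).card : ℤ) * h x := by
      simp only [hpts, Finset.sum_filter]
      rw [Finset.sum_comm]
      refine Finset.sum_congr rfl (fun x _ => ?_)
      rw [← Finset.sum_filter, Finset.sum_const, nsmul_eq_mul]
    have hcard1 : ∀ x : Pt, x ≠ P → (Λ.filter (fun ℓ => R x ℓ)).card = 1 := by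
      intro x hx
      obtain ⟨ℓ₀, ⟨hP0, hx0⟩, huniq⟩ := hPP.existsUnique_line P x (Ne.symm hx)
      rw [Finset.card_eq_one]
      refine ⟨ℓ₀, ?_⟩
      ext ℓ
      simp only [Finset.mem_filter, Finset.mem_singleton, hΛ, Finset.mem_univ, true_and]
      constructor
      · rintro ⟨h1, h2⟩; exact huniq ℓ ⟨h1, h2⟩
      · rintro rfl; exact ⟨hP0, hx0⟩
    have hcardP : (Λ.filter (fun ℓ => R P ℓ)).card = p ^ 2 + 1 := by
      rw [Finset.filter_eq_self.mpr, hΛcard]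
      intro ℓ hℓ
      rw [hΛ, Finset.mem_filter] at hℓ
      exact hℓ.2
    rw [step1]
    have hsplit : ∀ x : Pt, ((Λ.filter (fun ℓ => R x ℓ)).card : ℤ) * h x
        = h x + (if x = P then (p ^ 2 : ℤ) * h P else 0) := by
      intro x
      by_cases hx : x = P
      · subst hx; rw [hcardP, if_pos rfl]; push_cast; ring
      · rw [hcard1 x hx, if_neg hx]; push_cast; ring
    rw [Finset.sum_congr rfl (fun x _ => hsplit x), Finset.sum_add_distrib,
      Finset.sum_ite_eq' univ P (fun _ => (p ^ 2 : ℤ) * h P)]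
    simp
  have hT : ∑ ℓ ∈ Λ, ∑ x ∈ pts ℓ, g x = ((A.card : ℤ) + B.card) + p ^ 2 := by
    rw [hcount g, hsumg, hgP]; ring
  have hU : ∑ ℓ ∈ Λ, ∑ x ∈ pts ℓ, f x = ((A.card : ℤ) - B.card) + p ^ 2 := by
    have hfP : f P = 1 := by simp [hf, hcP, hne]
    rw [hcount f, hsumf, hfP]; ring
  -- per-line inequality
  have hkey : ∀ ℓ ∈ Λ, ((p : ℤ) - 2) * |m ℓ| + 2 ≤ ∑ x ∈ pts ℓ, g x := by
    intro ℓ hℓ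
    have hRP : R P ℓ := by
      rw [hΛ, Finset.mem_filter] at hℓ; exact hℓ.2
    have hSg1 : 1 ≤ ∑ x ∈ pts ℓ, g x := by
      have hmem : P ∈ pts ℓ := by simp [hpts, hRP]
      have h1 := Finset.single_le_sum (fun x _ => hgnonneg x) hmem
      rw [hgP] at h1
      exact h1
    have habs : |∑ x ∈ pts ℓ, f x| ≤ ∑ x ∈ pts ℓ, g x :=
      le_trans (Finset.abs_sum_le_sum_abs _ _) (Finset.sum_le_sum (fun x _ => habsfg x))
    have hpar : 2 ∣ (∑ x ∈ pts ℓ, g x) - ∑ x ∈ pts ℓ, f x := by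
      rw [← Finset.sum_sub_distrib]
      exact Finset.dvd_sum (fun x _ => hfgpar x)
    rw [hm ℓ] at habs hpar
    by_cases hm0 : m ℓ = 0
    · rw [hm0]
      simp only [abs_zero, mul_zero, zero_add]
      rw [hm0, mul_zero, sub_zero] at hpar
      omega
    · have h1 : 1 ≤ |m ℓ| := Int.one_le_abs (by exact_mod_cast hm0)
      have habs' : (p : ℤ) * |m ℓ| ≤ ∑ x ∈ pts ℓ, g x := by
        rwa [abs_mul, abs_of_nonneg (by positivity : (0:ℤ) ≤ (p:ℤ))] at habs
      nlinarith [h1, habs', hp3']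
  -- summing the inequality
  have hsumkey : ((p : ℤ) - 2) * (∑ ℓ ∈ Λ, |m ℓ|) + 2 * (p ^ 2 + 1)
      ≤ ((A.card : ℤ) + B.card) + p ^ 2 := by
    have h1 : ∑ ℓ ∈ Λ, (((p : ℤ) - 2) * |m ℓ| + 2) ≤ ∑ ℓ ∈ Λ, ∑ x ∈ pts ℓ, g x :=
      Finset.sum_le_sum hkey
    rw [Finset.sum_add_distrib, ← Finset.mul_sum, Finset.sum_const, hΛcard] at h1
    rw [hT] at h1
    push_cast [nsmul_eq_mul] at h1 ⊢
    linarith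
  -- the signed sum over the pencil
  have hMU : (p : ℤ) * (∑ ℓ ∈ Λ, m ℓ) = ((A.card : ℤ) - B.card) + p ^ 2 := by
    rw [← hU, Finset.mul_sum]
    exact Finset.sum_congr rfl (fun ℓ _ => (hm ℓ).symm)
  have hMV : (∑ ℓ ∈ Λ, m ℓ) ≤ ∑ ℓ ∈ Λ, |m ℓ| :=
    Finset.sum_le_sum (fun ℓ _ => le_abs_self _)
  -- final arithmetic
  set aZ : ℤ := (A.card : ℤ) with haZ
  set bZ : ℤ := (B.card : ℤ) with hbZ
  set M : ℤ := ∑ ℓ ∈ Λ, m ℓ with hM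
  set V : ℤ := ∑ ℓ ∈ Λ, |m ℓ| with hV
  have hab' : bZ < aZ := by
    rw [haA, hbB] at hab
    rw [haZ, hbZ]
    exact_mod_cast hab
  have hABcast : aZ + bZ = 2 * (p : ℤ) ^ 2 - 2 * (p : ℤ) + 2 + ε := by
    have hle : 2 * p ≤ 2 * p ^ 2 := by nlinarith
    have h1 : A.card + B.card = 2 * p ^ 2 - 2 * p + 2 + ε := by rw [hABS, hwS]
    rw [haZ, hbZ]
    zify [hle] at h1
    linarith
  set D : ℤ := M - p with hD
  have hpD : (p : ℤ) * D = aZ - bZ := by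
    have h1 : (p : ℤ) * D = (p : ℤ) * M - (p : ℤ) ^ 2 := by rw [hD]; ring
    rw [h1, hMU]; ring
  have hD1 : 1 ≤ D := by
    by_contra hcon
    push_neg at hcon
    have h0 : (p : ℤ) * D ≤ 0 :=
      mul_nonpos_of_nonneg_of_nonpos (by positivity) (by omega)
    rw [hpD] at h0
    linarith
  have hεZ : (ε : ℤ) ≤ (p : ℤ) - 2 := by
    have : (ε : ℤ) ≤ ((p - 2 : ℕ) : ℤ) := by exact_mod_cast hε2
    omega
  have hVD : (p : ℤ) + D ≤ V := by
    rw [hD]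
    linarith [hMV]
  have hmain : ((p : ℤ) - 2) * D ≤ (ε : ℤ) := by
    have h1 : ((p : ℤ) - 2) * ((p : ℤ) + D) ≤ ((p : ℤ) - 2) * V :=
      mul_le_mul_of_nonneg_left hVD (by linarith)
    nlinarith [hsumkey, hABcast, h1]
  have hεeq : (ε : ℤ) = (p : ℤ) - 2 := by
    have h1 : (p : ℤ) - 2 ≤ ((p : ℤ) - 2) * D := le_mul_of_one_le_right (by linarith) hD1
    linarith
  have hDeq : D = 1 := by
    by_contra hcon
    have h2D : 2 ≤ D := by omega
    have : ((p : ℤ) - 2) * 2 ≤ ((p : ℤ) - 2) * D :=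
      mul_le_mul_of_nonneg_left h2D (by linarith)
    linarith
  constructor
  · rw [haA, hbB, ← haZ, ← hbZ, ← hpD, hDeq, mul_one]
  · omega

/-- For a two-valued code word (values among `{0, 1, p-1}`) of weight
`2p² - 2p + 2 + ε`, `1 ≤ ε ≤ p - 2`, one has `||K₁| - |K_{p-1}|| ∈ {0, p}`, and
`||K₁| - |K_{p-1}|| = p` forces `ε = p - 2`. -/
theorem two_colour_card_difference {Pt Ln : Type} [Finite Pt] [Finite Ln]
    (p : ℕ) (hp : p.Prime) (hp3 : 3 ≤ p)
    (R : Pt → Ln → Prop) (hPP : IsProjectivePlaneOrder (p ^ 2) R)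
    (c : Pt → ZMod p) (hc : IsDualCodeWord p R c)
    (ε : ℕ) (hε1 : 1 ≤ ε) (hε2 : ε ≤ p - 2)
    (hw : (Function.support c).ncard = 2 * p ^ 2 - 2 * p + 2 + ε)
    (hval : ∀ x : Pt, c x = 0 ∨ c x = 1 ∨ c x = -1) :
    (((({x | c x = 1} : Set Pt).ncard : ℤ) - ({x | c x = -1} : Set Pt).ncard).natAbs = 0 ∨
      ((({x | c x = 1} : Set Pt).ncard : ℤ) - ({x | c x = -1} : Set Pt).ncard).natAbs = p) ∧
    (((({x | c x = 1} : Set Pt).ncard : ℤ) - ({x | c x = -1} : Set Pt).ncard).natAbs = p →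
      ε = p - 2) := by
  classical
  haveI := Fintype.ofFinite Pt
  haveI := Fintype.ofFinite Ln
  rcases lt_trichotomy (({x | c x = -1} : Set Pt).ncard) (({x | c x = 1} : Set Pt).ncard)
    with h | h | h
  · obtain ⟨h1, h2⟩ := two_colour_aux p hp hp3 R hPP c hc ε hε2 hw hval h
    refine ⟨Or.inr ?_, fun _ => h2⟩
    rw [h1]
    exact Int.natAbs_natCast p
  · refine ⟨Or.inl ?_, fun hcon => ?_⟩
    · rw [h]; simp
    · rw [h] at hcon
      simp at hcon
      omega
  · -- apply the auxiliary lemma to `-c`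
    have hc' : IsDualCodeWord p R (-c) := by
      intro ℓ
      have h0 := hc ℓ
      have hcoe : {y : Pt | R y ℓ} = (↑(Finset.univ.filter (fun x => R x ℓ)) : Set Pt) := by
        ext x; simp
      rw [hcoe, finsum_mem_coe_finset] at h0 ⊢
      simp only [Pi.neg_apply, Finset.sum_neg_distrib, h0, neg_zero]
    have hw' : (Function.support (-c)).ncard = 2 * p ^ 2 - 2 * p + 2 + ε := by
      have hsupp : Function.support (-c) = Function.support c := by
        ext x
        simp [Function.mem_support]
      rw [hsupp]
      exact hw
    have hval' : ∀ x : Pt, (-c) x = 0 ∨ (-c) x = 1 ∨ (-c) x = -1 := by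
      intro x
      rcases hval x with h0 | h0 | h0 <;> simp [h0]
    have hone : ({x : Pt | (-c) x = 1} : Set Pt) = {x | c x = -1} := by
      ext x
      simp [neg_eq_iff_eq_neg]
    have hmone : ({x : Pt | (-c) x = -1} : Set Pt) = {x | c x = 1} := by
      ext x
      simp [neg_inj, neg_eq_iff_eq_neg]
    have hab' : ({x : Pt | (-c) x = -1} : Set Pt).ncard < ({x : Pt | (-c) x = 1}).ncard := by
      rw [hone, hmone]
      exact h
    obtain ⟨h1, h2⟩ := two_colour_aux p hp hp3 R hPP (-c) hc' ε hε2 hw' hval' hab'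
    rw [hone, hmone] at h1
    refine ⟨Or.inr ?_, fun _ => h2⟩
    have : (({x | c x = 1} : Set Pt).ncard : ℤ) - ({x | c x = -1} : Set Pt).ncard = -(p : ℤ) := by
      linarith
    rw [this]
    simp
end

section
/- Let p ≥ 3 be a prime, Π a finite projective plane of order p², and c a code word of C(Π)^⊥ of weight w(c) = 2p² − 2p + 2 + ε with 1 ≤ ε ≤ p − 2, taking no values outside {0, 1, p−1} and with ||K₁| − |K_{p−1}|| = p. Then Π admits a Baer subplane: there exist a Baer subplane B of Π and a line ℓ of Π incident with exactly p + 1 points of B such that c = 𝟙_B − 𝟙_ℓ or c = 𝟙_ℓ − 𝟙_B. -/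
/-- A Baer subplane of a projective plane of order `p ^ 2`. -/
def IsBaerSubplane {P L : Type*} (p : ℕ) (R : P → L → Prop) (B : Set P) : Prop :=
  B.ncard = p ^ 2 + p + 1 ∧
    ∀ l : L, (B ∩ {x | R x l}).ncard = 1 ∨ (B ∩ {x | R x l}).ncard = p + 1

/-- The `F_p`-valued indicator function of a point set. -/
noncomputable def ind {P : Type*} (p : ℕ) (S : Set P) : P → ZMod p :=
  S.indicator fun _ => 1

/-!
Put `A = K₁`, `B = K_{p-1}` and assume `|A| = |B| + p` (otherwise replace `c` by `-c`). For a
line `l` let `u = |A ∩ l|` and `v = |B ∩ l|`; being a code word means `p ∣ u - v`, which makes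
`u (u - v - p (1 - v))` nonnegative. Double counting incident pairs gives the sum of these terms
over all lines as `p |A| (|B| + p - p²)`, while the weight bound says `|B| + p ≤ p²`. Hence
`|B| = p² - p` and every term vanishes. Then the lines through a point of `B` meet `A` at most
once each, so exactly one of them, `ℓ`, misses `A`, and `ℓ` contains all of `B`. The set
`A ∪ (ℓ \ B)` meets `ℓ` in `p + 1` points and any other line in `u - v + 1 ∈ {1, p + 1}` points,
and `c = 𝟙_{A ∪ (ℓ \ B)} - 𝟙_ℓ`.
-/

open Finset

def potential (p u v : ℤ) : ℤ := u * (u - v - p * (1 - v))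

theorem potential_nonneg {p u v : ℤ} (hp : 1 ≤ p) (hu : 0 ≤ u) (hv : 0 ≤ v) (hd : p ∣ u - v) :
    0 ≤ potential p u v := by
  obtain ⟨s, hs⟩ := hd
  have : potential p u v = p * u * (s + v - 1) := by
    rw [potential, show u = v + p * s by linarith]; ring
  rw [this]
  rcases le_or_gt u 0 with hu0 | hu0
  · simp [le_antisymm hu0 hu]
  refine mul_nonneg (by positivity) ?_
  rcases lt_trichotomy s 0 with hs0 | rfl | hs0
  · nlinarith
  · omega
  · omega

theorem potential_eq_zero_of_one_le {p u v : ℤ} (hp : 2 ≤ p) (hu : 0 ≤ u) (hv : 1 ≤ v)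
    (h : potential p u v = 0) : u = 0 ∨ u = 1 ∧ v = 1 := by
  rcases mul_eq_zero.1 h with hu | hu
  · exact .inl hu
  · obtain rfl | hv : v = 1 ∨ 2 ≤ v := by omega
    · right; constructor <;> linarith
    · left; nlinarith

theorem potential_eq_zero_of_le_one {p u v : ℤ} (hp : 2 ≤ p) (hv₀ : 0 ≤ v) (hv₁ : v ≤ 1)
    (hd : p ∣ u - v) (h : potential p u v = 0) : u - v = 0 ∨ u - v = p := by
  obtain rfl | rfl : v = 0 ∨ v = 1 := by omega
  · rcases mul_eq_zero.1 h with hu | hu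
    · simp [hu]
    · right; linarith
  · rcases mul_eq_zero.1 h with rfl | hu
    · have := Int.le_of_dvd one_pos (by simpa using hd.neg_right)
      omega
    · left; linarith

theorem Finset.sum_eq_card_filter_sub_card_filter {ι M : Type*} [Ring M] [DecidableEq M]
    (h : (1 : M) ≠ -1) (s : Finset ι) {f : ι → M} (hf : ∀ x ∈ s, f x = 0 ∨ f x = 1 ∨ f x = -1) :
    ∑ x ∈ s, f x = #{x ∈ s | f x = 1} - #{x ∈ s | f x = -1} := by
  have h₀ : (0 : M) ≠ 1 := fun h₀ => h (by rw [← h₀, neg_zero])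
  rw [natCast_card_filter, natCast_card_filter, ← sum_sub_distrib]
  refine sum_congr rfl fun x hx => ?_
  rcases hf x hx with h' | h' | h' <;> simp [h', h, h.symm, h₀, h₀.symm]

theorem ncard_coe_inter_setOf {α : Type*} (S : Finset α) (q : α → Prop) [DecidablePred q] :
    ((S : Set α) ∩ {x | q x}).ncard = #{x ∈ S | q x} := by
  rw [← Set.ncard_coe_finset, coe_filter]
  rfl

namespace IsProjectivePlaneOrder

variable {Pt Ln : Type*} {R : Pt → Ln → Prop} [DecidableRel R] {n p : ℕ} {A B : Finset Pt}

theorem sum_card_filter_mul [Fintype Ln] (S : Finset Pt) (g : Ln → ℤ) :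
    ∑ l, (#{x ∈ S | R x l} : ℤ) * g l = ∑ x ∈ S, ∑ l with R x l, g l := by
  simp_rw [card_filter, Nat.cast_sum, sum_mul, sum_filter]
  rw [sum_comm]
  simp

theorem card_filter_points [Fintype Pt] (hPP : IsProjectivePlaneOrder n R) (l : Ln) :
    #{x | R x l} = n + 1 := by
  simpa [← Set.ncard_coe_finset] using hPP.line_card l

theorem card_filter_lines [Fintype Ln] (hPP : IsProjectivePlaneOrder n R) (x : Pt) :
    #{l | R x l} = n + 1 := by
  simpa [← Set.ncard_coe_finset] using hPP.point_card x

theorem card_filter_lines_through_pair [Fintype Ln] (hPP : IsProjectivePlaneOrder n R)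
    {x y : Pt} (h : x ≠ y) : #{l | R x l ∧ R y l} = 1 := by
  obtain ⟨l, hl, hu⟩ := hPP.existsUnique_line x y h
  exact card_eq_one.2 ⟨l, by ext m; simpa using ⟨hu m, fun h => h ▸ hl⟩⟩

theorem card_filter_points_on_pair [Fintype Pt] (hPP : IsProjectivePlaneOrder n R)
    {l m : Ln} (h : l ≠ m) : #{x | R x l ∧ R x m} = 1 := by
  obtain ⟨x, hx, hu⟩ := hPP.existsUnique_point l m h
  exact card_eq_one.2 ⟨x, by ext y; simpa using ⟨hu y, fun h => h ▸ hx⟩⟩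

theorem sum_card_filter [Fintype Ln] (hPP : IsProjectivePlaneOrder n R) (S : Finset Pt) :
    ∑ l, (#{x ∈ S | R x l} : ℤ) = #S * (n + 1) := by
  simpa [hPP.card_filter_lines] using sum_card_filter_mul (R := R) S 1

theorem sum_card_filter_of_mem [Fintype Ln] [DecidableEq Pt] (hPP : IsProjectivePlaneOrder n R)
    (S : Finset Pt) (x : Pt) :
    ∑ l with R x l, (#{y ∈ S | R y l} : ℤ) = #S + if x ∈ S then (n : ℤ) else 0 := by
  have pair : ∀ y ∈ S, (#{l | R y l ∧ R x l} : ℤ) = 1 + if y = x then (n : ℤ) else 0 := by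
    intro y _
    split_ifs with hyx
    · simp [hyx, hPP.card_filter_lines, add_comm]
    · simp [hPP.card_filter_lines_through_pair hyx]
  calc ∑ l with R x l, (#{y ∈ S | R y l} : ℤ)
      = ∑ y ∈ S, (#{l | R y l ∧ R x l} : ℤ) := by
        simp_rw [card_filter, Nat.cast_sum, sum_filter]
        rw [sum_comm]
        refine sum_congr rfl fun l _ => ?_
        by_cases hx : R x l <;> simp [hx]
    _ = #S + if x ∈ S then (n : ℤ) else 0 := by
        rw [sum_congr rfl pair, sum_add_distrib, sum_ite_eq']
        simp

theorem sum_card_filter_mul_card_filter [Fintype Ln] [DecidableEq Pt]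
    (hPP : IsProjectivePlaneOrder n R) (S T : Finset Pt) :
    ∑ l, (#{x ∈ S | R x l} : ℤ) * #{x ∈ T | R x l} = #S * #T + n * #(S ∩ T) := by
  simp_rw [mul_comm (#{x ∈ S | R x _} : ℤ), sum_card_filter_mul, sum_card_filter_of_mem hPP,
    sum_add_distrib, sum_ite_mem, sum_const, nsmul_eq_mul, inter_comm T]
  ring

theorem sum_potential [Fintype Ln] [DecidableEq Pt] (hPP : IsProjectivePlaneOrder n R)
    (hAB : Disjoint A B) (p : ℤ) :
    ∑ l, potential p #{x ∈ A | R x l} #{x ∈ B | R x l} =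
      #A * (#A - #B + n - p * (n + 1) + p * #B) := by
  have hAA := hPP.sum_card_filter_mul_card_filter A A
  have hAB' := hPP.sum_card_filter_mul_card_filter A B
  rw [inter_self] at hAA
  rw [disjoint_iff_inter_eq_empty.1 hAB] at hAB'
  have hA := hPP.sum_card_filter A
  calc ∑ l, potential p #{x ∈ A | R x l} #{x ∈ B | R x l}
      = ∑ l, ((#{x ∈ A | R x l} : ℤ) * #{x ∈ A | R x l}
          + (p - 1) * ((#{x ∈ A | R x l} : ℤ) * #{x ∈ B | R x l}) - p * #{x ∈ A | R x l}) :=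
        sum_congr rfl fun l _ => by rw [potential]; ring
    _ = #A * (#A - #B + n - p * (n + 1) + p * #B) := by
        rw [sum_sub_distrib, sum_add_distrib, ← mul_sum, ← mul_sum, hAA, hAB', hA]
        simp only [card_empty, Nat.cast_zero]
        ring

theorem card_add_eq_and_potential_eq_zero [Fintype Ln] [DecidableEq Pt] (hp : 0 < p)
    (hPP : IsProjectivePlaneOrder (p ^ 2) R) (hAB : Disjoint A B) (hcard : #A = #B + p)
    (hsize : #A + #B + p ≤ 2 * p ^ 2)
    (hdvd : ∀ l, (p : ℤ) ∣ #{x ∈ A | R x l} - #{x ∈ B | R x l}) :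
    #B + p = p ^ 2 ∧ ∀ l, potential p #{x ∈ A | R x l} #{x ∈ B | R x l} = 0 := by
  have hnonneg : ∀ l, 0 ≤ potential p #{x ∈ A | R x l} #{x ∈ B | R x l} := fun l =>
    potential_nonneg (by exact_mod_cast hp) (by positivity) (by positivity) (hdvd l)
  have hsum := hPP.sum_potential hAB p
  have hsum' : ∑ l, potential p #{x ∈ A | R x l} #{x ∈ B | R x l} =
      p * #A * (#B + p - p ^ 2 : ℤ) := by
    rw [hsum, hcard]; push_cast; ring
  have hle : #B + p ≤ p ^ 2 := by nlinarith
  have hpos : (0 : ℤ) < p * #A := by rw [hcard]; positivity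
  have hB : #B + p = p ^ 2 := by
    refine le_antisymm hle ?_
    have := hsum' ▸ sum_nonneg fun l _ => hnonneg l
    have : (0 : ℤ) ≤ #B + p - p ^ 2 := nonneg_of_mul_nonneg_right this hpos
    exact_mod_cast (by linarith : (p : ℤ) ^ 2 ≤ #B + p)
  refine ⟨hB, fun l => (sum_eq_zero_iff_of_nonneg fun l _ => hnonneg l).1 ?_ l (mem_univ l)⟩
  rw [hsum', show (#B + p : ℤ) = p ^ 2 by exact_mod_cast hB]
  ring

theorem exists_line_superset [Fintype Ln] [DecidableEq Pt] (hp : 2 ≤ p)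
    (hPP : IsProjectivePlaneOrder n R) (hAB : Disjoint A B) (hA : #A = n) (hB : B.Nonempty)
    (hzero : ∀ l, potential p #{x ∈ A | R x l} #{x ∈ B | R x l} = 0) :
    ∃ ℓ, (∀ x ∈ B, R x ℓ) ∧ ∀ x ∈ A, ¬R x ℓ := by
  obtain ⟨x, hx⟩ := hB
  have hxA : x ∉ A := disjoint_right.1 hAB hx
  have hcases : ∀ l, R x l →
      #{y ∈ A | R y l} = 0 ∨ #{y ∈ A | R y l} = 1 ∧ #{y ∈ B | R y l} = 1 := fun l hl => by
    have hv : 0 < #{y ∈ B | R y l} := card_pos.2 ⟨x, mem_filter.2 ⟨hx, hl⟩⟩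
    exact_mod_cast potential_eq_zero_of_one_le (p := p) (by omega) (by positivity)
      (by exact_mod_cast hv) (hzero l)
  -- the lines through `x` carry the `n` points of `A` at most one each, so one of them misses `A`
  have hmiss : #{l | R x l ∧ #{y ∈ A | R y l} = 0} = 1 := by
    have hsum := hPP.sum_card_filter_of_mem A x
    rw [if_neg hxA, add_zero, hA] at hsum
    have hnz : ∑ l with R x l, (#{y ∈ A | R y l} : ℤ) =
        #{l | R x l ∧ ¬#{y ∈ A | R y l} = 0} := by
      rw [← filter_filter, ← sum_boole]
      exact sum_congr rfl fun l hl => by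
        rcases hcases l (mem_filter.1 hl).2 with h | ⟨h, -⟩ <;> simp [h]
    have hsplit := card_filter_add_card_filter_not (s := ({l | R x l} : Finset Ln))
      (fun l => #{y ∈ A | R y l} = 0)
    rw [filter_filter, filter_filter, hPP.card_filter_lines] at hsplit
    have : #{l | R x l ∧ ¬#{y ∈ A | R y l} = 0} = n := by exact_mod_cast hnz ▸ hsum
    omega
  obtain ⟨ℓ, hℓ⟩ := card_eq_one.1 hmiss
  have hℓmem : ∀ l, R x l → #{y ∈ A | R y l} = 0 → l = ℓ := fun l h₁ h₂ =>
    mem_singleton.1 (hℓ ▸ mem_filter.2 ⟨mem_univ l, h₁, h₂⟩)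
  obtain ⟨hxℓ, hAℓ⟩ : R x ℓ ∧ #{y ∈ A | R y ℓ} = 0 := by
    have : ℓ ∈ ({l | R x l ∧ #{y ∈ A | R y l} = 0} : Finset Ln) := hℓ ▸ mem_singleton_self ℓ
    exact (mem_filter.1 this).2
  refine ⟨ℓ, fun y hy => ?_, fun y hy hyℓ => ?_⟩
  · obtain rfl | hxy := eq_or_ne x y
    · exact hxℓ
    obtain ⟨m, ⟨hxm, hym⟩, -⟩ := hPP.existsUnique_line x y hxy
    have hm : 2 ≤ #{z ∈ B | R z m} := by
      rw [← card_pair hxy]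
      exact card_le_card fun z hz => by
        rcases mem_insert.1 hz with rfl | hz
        · exact mem_filter.2 ⟨hx, hxm⟩
        · rw [mem_singleton.1 hz]; exact mem_filter.2 ⟨hy, hym⟩
    have : #{y ∈ A | R y m} = 0 := by have := hcases m hxm; omega
    exact hℓmem m hxm this ▸ hym
  · exact filter_eq_empty_iff.1 (card_eq_zero.1 hAℓ) hy hyℓ

theorem card_filter_le_one_of_ne [Fintype Pt] (hPP : IsProjectivePlaneOrder n R) {ℓ l : Ln}
    (hl : l ≠ ℓ) (hB : ∀ x ∈ B, R x ℓ) : #{x ∈ B | R x l} ≤ 1 :=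
  hPP.card_filter_points_on_pair hl ▸ card_le_card fun x hx => by
    simp only [mem_filter, mem_univ, true_and] at hx ⊢
    exact ⟨hx.2, hB x hx.1⟩

theorem card_filter_union_sdiff [Fintype Pt] [DecidableEq Pt] (hPP : IsProjectivePlaneOrder n R)
    {ℓ l : Ln} (hl : l ≠ ℓ) (hB : ∀ x ∈ B, R x ℓ) (hA : ∀ x ∈ A, ¬R x ℓ) :
    (#{x ∈ A ∪ (({x | R x ℓ} : Finset Pt) \ B) | R x l} : ℤ) =
      #{x ∈ A | R x l} - #{x ∈ B | R x l} + 1 := by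
  have hdisj : Disjoint {x ∈ A | R x l} {x ∈ ({x | R x ℓ} : Finset Pt) \ B | R x l} :=
    disjoint_filter_filter <| disjoint_left.2 fun x hx hx' =>
      hA x hx (mem_filter.1 (mem_sdiff.1 hx').1).2
  have hsub : {x ∈ B | R x l} ⊆ ({x | R x l ∧ R x ℓ} : Finset Pt) := fun x hx => by
    simp only [mem_filter, mem_univ, true_and] at hx ⊢
    exact ⟨hx.2, hB x hx.1⟩
  have hline : {x ∈ ({x | R x ℓ} : Finset Pt) \ B | R x l} =
      ({x | R x l ∧ R x ℓ} : Finset Pt) \ {x ∈ B | R x l} := by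
    ext x; simp only [mem_filter, mem_sdiff, mem_univ, true_and]; tauto
  rw [filter_union, card_union_of_disjoint hdisj, hline, card_sdiff_of_subset hsub,
    hPP.card_filter_points_on_pair hl, Nat.cast_add,
    Nat.cast_sub (hPP.card_filter_le_one_of_ne hl hB)]
  push_cast
  ring

theorem exists_isBaerSubplane [Fintype Pt] [Fintype Ln] [DecidableEq Pt] (hp : 2 ≤ p)
    (hPP : IsProjectivePlaneOrder (p ^ 2) R) (hAB : Disjoint A B) (hcard : #A = #B + p)
    (hsize : #A + #B + p ≤ 2 * p ^ 2)
    (hdvd : ∀ l, (p : ℤ) ∣ #{x ∈ A | R x l} - #{x ∈ B | R x l}) :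
    ∃ ℓ, (∀ x ∈ B, R x ℓ) ∧ (∀ x ∈ A, ¬R x ℓ) ∧
      IsBaerSubplane p R ↑(A ∪ (({x | R x ℓ} : Finset Pt) \ B)) ∧
      (↑(A ∪ (({x | R x ℓ} : Finset Pt) \ B)) ∩ {x | R x ℓ} : Set Pt).ncard = p + 1 := by
  obtain ⟨hB, hzero⟩ := card_add_eq_and_potential_eq_zero (by omega) hPP hAB hcard hsize hdvd
  have hBne : B.Nonempty := card_pos.1 (by nlinarith)
  obtain ⟨ℓ, hBℓ, hAℓ⟩ := exists_line_superset hp hPP hAB (by omega) hBne hzero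
  have hBsub : B ⊆ ({x | R x ℓ} : Finset Pt) := fun x hx => mem_filter.2 ⟨mem_univ x, hBℓ x hx⟩
  have hdisj : Disjoint A (({x | R x ℓ} : Finset Pt) \ B) :=
    disjoint_left.2 fun x hx hx' => hAℓ x hx (mem_filter.1 (mem_sdiff.1 hx').1).2
  have hcardℓ : #(({x | R x ℓ} : Finset Pt) \ B) = p + 1 := by
    rw [card_sdiff_of_subset hBsub, hPP.card_filter_points]; omega
  have hfilterℓ : {x ∈ A ∪ (({x | R x ℓ} : Finset Pt) \ B) | R x ℓ} =
      ({x | R x ℓ} : Finset Pt) \ B := by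
    ext x
    simp only [mem_filter, mem_union, mem_sdiff, mem_univ, true_and]
    have := hAℓ x
    tauto
  refine ⟨ℓ, hBℓ, hAℓ, ⟨?_, fun l => ?_⟩, ?_⟩
  · rw [Set.ncard_coe_finset, card_union_of_disjoint hdisj, hcardℓ]; omega
  · rw [ncard_coe_inter_setOf]
    obtain rfl | hl := eq_or_ne l ℓ
    · exact .inr (by rw [hfilterℓ, hcardℓ])
    have hv := hPP.card_filter_le_one_of_ne hl hBℓ
    have h := hPP.card_filter_union_sdiff hl hBℓ hAℓ
    rcases potential_eq_zero_of_le_one (by exact_mod_cast hp) (by positivity)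
      (by exact_mod_cast hv) (hdvd l) (hzero l) with h' | h' <;> [left; right] <;> omega
  · rw [ncard_coe_inter_setOf, hfilterℓ, hcardℓ]

end IsProjectivePlaneOrder

namespace IsDualCodeWord

variable {Pt Ln : Type*} {p : ℕ} {R : Pt → Ln → Prop} {c : Pt → ZMod p}

theorem neg [Finite Pt] (hc : IsDualCodeWord p R c) : IsDualCodeWord p R (-c) := fun l => by
  rw [Pi.neg_def, finsum_mem_neg_distrib _ (Set.toFinite _), hc l, neg_zero]

theorem sum_eq_zero [Fintype Pt] [DecidableRel R] (hc : IsDualCodeWord p R c) (l : Ln) :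
    ∑ x with R x l, c x = 0 := by
  have := hc l
  rwa [← coe_filter_univ, finsum_mem_coe_finset] at this

theorem dvd_card_filter_sub_card_filter [Fintype Pt] [DecidableRel R] (hp : 2 < p)
    (hc : IsDualCodeWord p R c) (hval : ∀ x, c x = 0 ∨ c x = 1 ∨ c x = -1) (l : Ln) :
    (p : ℤ) ∣ #{x | c x = 1 ∧ R x l} - #{x | c x = -1 ∧ R x l} := by
  have : Fact (2 < p) := ⟨hp⟩
  rw [← ZMod.intCast_zmod_eq_zero_iff_dvd, ← hc.sum_eq_zero l,
    sum_eq_card_filter_sub_card_filter ZMod.neg_one_ne_one.symm _ fun x _ => hval x]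
  have hfilter : ∀ a : ZMod p, ({x ∈ {x | R x l} | c x = a} : Finset Pt) =
      ({x | c x = a ∧ R x l} : Finset Pt) :=
    fun a => by ext; simp [and_comm]
  rw [hfilter, hfilter]
  push_cast
  rfl

theorem exists_isBaerSubplane_eq_ind_sub_ind [Finite Pt] [Finite Ln] (hp : 3 ≤ p)
    (hPP : IsProjectivePlaneOrder (p ^ 2) R) (hc : IsDualCodeWord p R c)
    (hval : ∀ x, c x = 0 ∨ c x = 1 ∨ c x = -1)
    (hsize : (Function.support c).ncard + p ≤ 2 * p ^ 2)
    (hcard : {x | c x = 1}.ncard = {x | c x = -1}.ncard + p) :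
    ∃ (B : Set Pt) (ℓ : Ln), IsBaerSubplane p R B ∧ (B ∩ {x | R x ℓ}).ncard = p + 1 ∧
      c = ind p B - ind p {x | R x ℓ} := by
  classical
  have := Fintype.ofFinite Pt
  have := Fintype.ofFinite Ln
  have : Fact (1 < p) := ⟨by omega⟩
  have : Fact (2 < p) := ⟨hp⟩
  set A : Finset Pt := {x | c x = 1}
  set B : Finset Pt := {x | c x = -1}
  have hAB : Disjoint A B := disjoint_filter.2 fun x _ h₁ h₂ => ZMod.neg_one_ne_one (h₂ ▸ h₁)
  have hsupp : Function.support c = ↑(A ∪ B) := by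
    ext x
    rcases hval x with h | h | h <;> simp [A, B, h, ZMod.neg_one_ne_one.symm]
  rw [← coe_filter_univ, ← coe_filter_univ, Set.ncard_coe_finset, Set.ncard_coe_finset] at hcard
  rw [hsupp, Set.ncard_coe_finset, card_union_of_disjoint hAB] at hsize
  obtain ⟨ℓ, hBℓ, hAℓ, hbaer, hℓ⟩ := hPP.exists_isBaerSubplane (by omega) hAB hcard hsize
    fun l => by simpa only [A, B, filter_filter] using hc.dvd_card_filter_sub_card_filter hp hval l
  refine ⟨_, ℓ, hbaer, hℓ, funext fun x => ?_⟩
  have hAx := hAℓ x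
  have hBx := hBℓ x
  by_cases hx : R x ℓ <;> rcases hval x with h | h | h <;>
    simp_all [A, B, ind, ZMod.neg_one_ne_one, ZMod.neg_one_ne_one.symm]

end IsDualCodeWord

theorem baer_of_two_colour_difference_p_general {Pt Ln : Type} [Finite Pt] [Finite Ln]
    (p : ℕ) (hp3 : 3 ≤ p)
    (R : Pt → Ln → Prop) (hPP : IsProjectivePlaneOrder (p ^ 2) R)
    (c : Pt → ZMod p) (hc : IsDualCodeWord p R c)
    (ε : ℕ) (hε2 : ε ≤ p - 2)
    (hw : (Function.support c).ncard = 2 * p ^ 2 - 2 * p + 2 + ε)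
    (hval : ∀ x : Pt, c x = 0 ∨ c x = 1 ∨ c x = -1)
    (hdiff : ((({x | c x = 1} : Set Pt).ncard : ℤ) -
        ({x | c x = -1} : Set Pt).ncard).natAbs = p) :
    ∃ (B : Set Pt) (ℓ : Ln), IsBaerSubplane p R B ∧ (B ∩ {x | R x ℓ}).ncard = p + 1 ∧
      (c = ind p B - ind p {x | R x ℓ} ∨ c = ind p {x | R x ℓ} - ind p B) := by
  have hsize : (Function.support c).ncard + p ≤ 2 * p ^ 2 := by
    have : 2 * p ≤ 2 * p ^ 2 := by nlinarith
    omega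
  rcases Int.natAbs_eq_iff.1 hdiff with h | h
  · obtain ⟨B, ℓ, hB, hℓ, hcB⟩ :=
      hc.exists_isBaerSubplane_eq_ind_sub_ind hp3 hPP hval hsize (by omega)
    exact ⟨B, ℓ, hB, hℓ, .inl hcB⟩
  · have hval' : ∀ x, (-c) x = 0 ∨ (-c) x = 1 ∨ (-c) x = -1 := fun x => by
      rcases hval x with h | h | h <;> simp [h]
    obtain ⟨B, ℓ, hB, hℓ, hcB⟩ := hc.neg.exists_isBaerSubplane_eq_ind_sub_ind hp3 hPP hval'
      (by rwa [Function.support_neg])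
      (by simp only [Pi.neg_apply, neg_eq_iff_eq_neg, neg_neg]; omega)
    exact ⟨B, ℓ, hB, hℓ, .inr (by rw [← neg_sub, ← hcB, neg_neg])⟩

/-- A two-valued code word of weight `2p² - 2p + 2 + ε`, `1 ≤ ε ≤ p - 2`, with
`||K₁| - |K_{p-1}|| = p` comes from a Baer subplane and one of its secant lines. -/
theorem baer_of_two_colour_difference_p {Pt Ln : Type} [Finite Pt] [Finite Ln]
    (p : ℕ) (hp : p.Prime) (hp3 : 3 ≤ p)
    (R : Pt → Ln → Prop) (hPP : IsProjectivePlaneOrder (p ^ 2) R)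
    (c : Pt → ZMod p) (hc : IsDualCodeWord p R c)
    (ε : ℕ) (hε1 : 1 ≤ ε) (hε2 : ε ≤ p - 2)
    (hw : (Function.support c).ncard = 2 * p ^ 2 - 2 * p + 2 + ε)
    (hval : ∀ x : Pt, c x = 0 ∨ c x = 1 ∨ c x = -1)
    (hdiff : ((({x | c x = 1} : Set Pt).ncard : ℤ) -
        ({x | c x = -1} : Set Pt).ncard).natAbs = p) :
    ∃ (B : Set Pt) (ℓ : Ln), IsBaerSubplane p R B ∧ (B ∩ {x | R x ℓ}).ncard = p + 1 ∧
      (c = ind p B - ind p {x | R x ℓ} ∨ c = ind p {x | R x ℓ} - ind p B) :=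
  baer_of_two_colour_difference_p_general p hp3 R hPP c hc ε hε2 hw hval hdiff
end

section
/- Let p ≥ 3 be a prime, Π a finite projective plane of order p², and c a code word of C(Π)^⊥ of weight w(c) = 2p² − 2p + 2 + ε with 1 ≤ ε ≤ p − 2, taking no values outside {0, 1, p−1} and with |K₁| = |K_{p−1}|. Then no line of Π through a point of K₁ is incident with at least p points of K_{p−1}, and no line of Π through a point of K_{p−1} is incident with at least p points of K₁. -/
set_option maxHeartbeats 1000000 in
lemma aux_no_long_secant {Pt Ln : Type} [Finite Pt] [Finite Ln]
    (p : ℕ) (hp : p.Prime) (hp3 : 3 ≤ p)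
    (R : Pt → Ln → Prop) (hPP : IsProjectivePlaneOrder (p ^ 2) R)
    (c : Pt → ZMod p) (hc : IsDualCodeWord p R c)
    (ε : ℕ) (hε2 : ε ≤ p - 2)
    (hw : (Function.support c).ncard = 2 * p ^ 2 - 2 * p + 2 + ε)
    (hval : ∀ x : Pt, c x = 0 ∨ c x = 1 ∨ c x = -1)
    (hcard : ({x | c x = 1} : Set Pt).ncard = ({x | c x = -1} : Set Pt).ncard)
    (l₀ : Ln) (x : Pt) (hxl : R x l₀) (hcx : c x = 1)
    (hb : p ≤ ({y | R y l₀ ∧ c y = -1} : Set Pt).ncard) : False := by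
  classical
  cases nonempty_fintype Pt
  cases nonempty_fintype Ln
  haveI : Fact p.Prime := ⟨hp⟩
  have h10 : (1 : ZMod p) ≠ 0 := one_ne_zero
  have hm0 : (-1 : ZMod p) ≠ 0 := by
    simp only [ne_eq, neg_eq_zero]; exact one_ne_zero
  have h1m : (1 : ZMod p) ≠ -1 := by
    intro h
    have h2 : ((2 : ℕ) : ZMod p) = 0 := by
      push_cast
      linear_combination h
    rw [ZMod.natCast_eq_zero_iff] at h2
    have := Nat.le_of_dvd (by norm_num) h2
    omega
  set K1 : Finset Pt := Finset.univ.filter (fun y => c y = 1) with hK1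
  set Km : Finset Pt := Finset.univ.filter (fun y => c y = -1) with hKm
  set Lx : Finset Ln := Finset.univ.filter (fun l => R x l) with hLx
  set A : Ln → Finset Pt := fun l => Finset.univ.filter (fun y => R y l ∧ c y = 1) with hA
  set B : Ln → Finset Pt := fun l => Finset.univ.filter (fun y => R y l ∧ c y = -1) with hB
  have hsK1 : ({y | c y = 1} : Set Pt) = ↑K1 := by ext y; simp [hK1]
  have hsKm : ({y | c y = -1} : Set Pt) = ↑Km := by ext y; simp [hKm]
  have hcard' : K1.card = Km.card := by
    rw [hsK1, hsKm, Set.ncard_coe_finset, Set.ncard_coe_finset] at hcard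
    exact hcard
  have hsupp : (Function.support c : Set Pt) = ↑(K1 ∪ Km) := by
    ext y
    simp only [Function.mem_support, Finset.coe_union, Set.mem_union, Finset.mem_coe,
      hK1, hKm, Finset.mem_filter, Finset.mem_univ, true_and]
    rcases hval y with h | h | h <;> simp [h, h10, hm0, Ne.symm h10, Ne.symm hm0]
  have hdisj : Disjoint K1 Km := by
    rw [Finset.disjoint_left]
    intro y hy hy'
    simp only [hK1, hKm, Finset.mem_filter, Finset.mem_univ, true_and] at hy hy'
    exact h1m (hy.symm.trans hy')
  have hKsum : K1.card + Km.card = 2 * p ^ 2 - 2 * p + 2 + ε := by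
    rw [hsupp, Set.ncard_coe_finset, Finset.card_union_of_disjoint hdisj] at hw
    exact hw
  have hLxcard : Lx.card = p ^ 2 + 1 := by
    have := hPP.point_card x
    have h : ({l | R x l} : Set Ln) = ↑Lx := by ext l; simp [hLx]
    rwa [h, Set.ncard_coe_finset] at this
  -- line sum congruence : (A l).card ≡ (B l).card mod p
  have hmod : ∀ l : Ln, (A l).card ≡ (B l).card [MOD p] := by
    intro l
    have hsum := hc l
    have hset : ({y : Pt | R y l} : Set Pt)
        = ↑(Finset.univ.filter (fun y => R y l)) := by ext y; simp
    rw [hset, finsum_mem_coe_finset] at hsum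
    set L : Finset Pt := Finset.univ.filter (fun y => R y l) with hLdef
    have hsplit : ∑ y ∈ L, c y
        = ∑ y ∈ L.filter (fun y => c y = 1), c y
          + ∑ y ∈ L.filter (fun y => ¬ c y = 1), c y :=
      (Finset.sum_filter_add_sum_filter_not L _ _).symm
    have hsplit2 : ∑ y ∈ L.filter (fun y => ¬ c y = 1), c y
        = ∑ y ∈ (L.filter (fun y => ¬ c y = 1)).filter (fun y => c y = -1), c y
          + ∑ y ∈ (L.filter (fun y => ¬ c y = 1)).filter (fun y => ¬ c y = -1), c y :=
      (Finset.sum_filter_add_sum_filter_not _ _ _).symm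
    have e1 : ∑ y ∈ L.filter (fun y => c y = 1), c y
        = ((L.filter (fun y => c y = 1)).card : ZMod p) := by
      rw [Finset.sum_congr rfl (fun y hy => (Finset.mem_filter.mp hy).2)]
      simp
    have e2 : ∑ y ∈ (L.filter (fun y => ¬ c y = 1)).filter (fun y => c y = -1), c y
        = -(((L.filter (fun y => ¬ c y = 1)).filter (fun y => c y = -1)).card : ZMod p) := by
      rw [Finset.sum_congr rfl (fun y hy => (Finset.mem_filter.mp hy).2)]
      simp
    have e3 : ∑ y ∈ (L.filter (fun y => ¬ c y = 1)).filter (fun y => ¬ c y = -1), c y = 0 := by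
      apply Finset.sum_eq_zero
      intro y hy
      simp only [Finset.mem_filter] at hy
      rcases hval y with h | h | h
      · exact h
      · exact absurd h hy.1.2
      · exact absurd h hy.2
    have eA : L.filter (fun y => c y = 1) = A l := by
      rw [hLdef, Finset.filter_filter]
    have eB : (L.filter (fun y => ¬ c y = 1)).filter (fun y => c y = -1) = B l := by
      ext y
      simp only [hB, hLdef, Finset.mem_filter, Finset.mem_univ, true_and]
      constructor
      · rintro ⟨⟨h1, _⟩, h2⟩; exact ⟨h1, h2⟩
      · rintro ⟨h1, h2⟩
        exact ⟨⟨h1, fun h => h1m (h.symm.trans h2)⟩, h2⟩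
    rw [hsplit, hsplit2, e1, e2, e3, eA, eB] at hsum
    have : ((A l).card : ZMod p) = ((B l).card : ZMod p) := by linear_combination hsum
    exact (ZMod.natCast_eq_natCast_iff _ _ _).mp this
  have hxA : ∀ l ∈ Lx, x ∈ A l := by
    intro l hl
    simp only [hLx, Finset.mem_filter, Finset.mem_univ, true_and] at hl
    simp [hA, hl, hcx]
  have hBdisj : ∀ l ∈ Lx, ∀ m ∈ Lx, l ≠ m → Disjoint (B l) (B m) := by
    intro l hl m hm hlm
    rw [Finset.disjoint_left]
    intro y hyl hym
    simp only [hB, Finset.mem_filter, Finset.mem_univ, true_and] at hyl hym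
    simp only [hLx, Finset.mem_filter, Finset.mem_univ, true_and] at hl hm
    obtain ⟨z, _, huniq⟩ := hPP.existsUnique_point l m hlm
    have hyx : y = x := (huniq y ⟨hyl.1, hym.1⟩).trans (huniq x ⟨hl, hm⟩).symm
    rw [hyx, hcx] at hyl
    exact h1m hyl.2
  have hBuni : Lx.biUnion B = Km := by
    ext y
    simp only [Finset.mem_biUnion, hB, hKm, hLx, Finset.mem_filter, Finset.mem_univ, true_and]
    constructor
    · rintro ⟨l, _, _, h⟩; exact h
    · intro hy
      have hyx : y ≠ x := by
        intro h; rw [h, hcx] at hy; exact h1m hy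
      obtain ⟨l, ⟨hxl', hyl'⟩, _⟩ := hPP.existsUnique_line x y (Ne.symm hyx)
      exact ⟨l, hxl', hyl', hy⟩
  have hKmsum : ∑ l ∈ Lx, (B l).card = Km.card := by
    rw [← Finset.card_biUnion hBdisj, hBuni]
  have hAdisj : ∀ l ∈ Lx, ∀ m ∈ Lx, l ≠ m →
      Disjoint ((A l).erase x) ((A m).erase x) := by
    intro l hl m hm hlm
    rw [Finset.disjoint_left]
    intro y hyl hym
    have hyx : y ≠ x := (Finset.mem_erase.mp hyl).1
    have hyl' := (Finset.mem_erase.mp hyl).2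
    have hym' := (Finset.mem_erase.mp hym).2
    simp only [hA, Finset.mem_filter, Finset.mem_univ, true_and] at hyl' hym'
    simp only [hLx, Finset.mem_filter, Finset.mem_univ, true_and] at hl hm
    obtain ⟨z, _, huniq⟩ := hPP.existsUnique_point l m hlm
    exact hyx ((huniq y ⟨hyl'.1, hym'.1⟩).trans (huniq x ⟨hl, hm⟩).symm)
  have hAuni : Lx.biUnion (fun l => (A l).erase x) = K1.erase x := by
    ext y
    simp only [Finset.mem_biUnion, Finset.mem_erase, hA, hK1, hLx, Finset.mem_filter,
      Finset.mem_univ, true_and]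
    constructor
    · rintro ⟨l, _, hyx, _, h⟩; exact ⟨hyx, h⟩
    · rintro ⟨hyx, hy⟩
      obtain ⟨l, ⟨hxl', hyl'⟩, _⟩ := hPP.existsUnique_line x y (Ne.symm hyx)
      exact ⟨l, hxl', hyx, hyl', hy⟩
  have hAsum : ∑ l ∈ Lx, (A l).card = (K1.erase x).card + Lx.card := by
    have h1 : ∀ l ∈ Lx, (A l).card = ((A l).erase x).card + 1 := by
      intro l hl
      exact (Finset.card_erase_add_one (hxA l hl)).symm
    rw [Finset.sum_congr rfl h1, Finset.sum_add_distrib, Finset.sum_const, smul_eq_mul,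
      mul_one, ← Finset.card_biUnion hAdisj, hAuni]
  have hxK1 : x ∈ K1 := by simp [hK1, hcx]
  have hK1erase : (K1.erase x).card + 1 = K1.card := Finset.card_erase_add_one hxK1
  -- the set S of lines through x disjoint from K₋₁
  set S : Finset Ln := Lx.filter (fun l => (B l).card = 0) with hS
  have hScardLx : S.card ≤ Lx.card := Finset.card_filter_le _ _
  have hSbig : ∀ l ∈ S, p ≤ (A l).card := by
    intro l hl
    simp only [hS, Finset.mem_filter] at hl
    have hdvd : p ∣ (A l).card := by
      have := hmod l
      rw [hl.2] at this
      exact (Nat.modEq_zero_iff_dvd).mp this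
    have hpos : 0 < (A l).card := Finset.card_pos.mpr ⟨x, hxA l hl.1⟩
    exact Nat.le_of_dvd hpos hdvd
  have hfiltercards : S.card + (Lx.filter (fun l => ¬ (B l).card = 0)).card = Lx.card := by
    have h := Finset.card_filter_add_card_filter_not
      (s := Lx) (p := fun l => (B l).card = 0)
    rw [← hS] at h
    exact h
  -- lower bound on ∑ (A l).card
  have hAlower : S.card * p + (Lx.card - S.card) ≤ ∑ l ∈ Lx, (A l).card := by
    have hsplit : ∑ l ∈ Lx, (A l).card
        = ∑ l ∈ S, (A l).card + ∑ l ∈ Lx.filter (fun l => ¬ (B l).card = 0), (A l).card := by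
      rw [hS]
      exact (Finset.sum_filter_add_sum_filter_not Lx _ _).symm
    have hS1 : S.card * p ≤ ∑ l ∈ S, (A l).card := by
      have := Finset.card_nsmul_le_sum S (fun l => (A l).card) p hSbig
      simpa [smul_eq_mul] using this
    have hS2 : Lx.card - S.card ≤ ∑ l ∈ Lx.filter (fun l => ¬ (B l).card = 0), (A l).card := by
      have h1 := Finset.card_nsmul_le_sum (Lx.filter (fun l => ¬ (B l).card = 0))
        (fun l => (A l).card) 1
        (fun l hl => Finset.card_pos.mpr ⟨x, hxA l (Finset.mem_of_mem_filter l hl)⟩)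
      simp only [smul_eq_mul, mul_one] at h1
      omega
    rw [hsplit]
    exact Nat.add_le_add hS1 hS2
  -- S has at most p elements
  have hpq2 : p ≤ p ^ 2 := Nat.le_self_pow two_ne_zero p
  have hSp : S.card ≤ p := by
    by_contra hSc
    push_neg at hSc
    obtain ⟨r, hr⟩ : ∃ r, p = r + 1 := ⟨p - 1, by omega⟩
    have key : S.card * p = S.card * r + S.card := by rw [hr]; ring
    have h2 : (r + 2) * r ≤ S.card * r := Nat.mul_le_mul_right r (by omega)
    obtain ⟨u, hu⟩ : ∃ u, S.card * r = u := ⟨_, rfl⟩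
    obtain ⟨v, hv⟩ : ∃ v, (r + 2) * r = v := ⟨_, rfl⟩
    obtain ⟨q, hq⟩ : ∃ q, p ^ 2 = q := ⟨_, rfl⟩
    have hqv : v + 1 = q := by rw [← hv, ← hq, hr]; ring
    rw [hu, hv] at h2
    rw [hu] at key
    rw [hq] at hLxcard hKsum hpq2
    rw [hAsum, key] at hAlower
    omega
  -- final count on lines through x
  have hl₀Lx : l₀ ∈ Lx := by simp [hLx, hxl]
  have hbB : p ≤ (B l₀).card := by
    have hset : ({y | R y l₀ ∧ c y = -1} : Set Pt) = ↑(B l₀) := by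
      ext y; simp [hB]
    rwa [hset, Set.ncard_coe_finset] at hb
  have hsum0 : (B l₀).card + ∑ l ∈ Lx.erase l₀, (B l).card = Km.card := by
    rw [← hKmsum]
    exact Finset.add_sum_erase Lx (fun l => (B l).card) hl₀Lx
  have hrest : ((Lx.erase l₀).filter (fun l => ¬ (B l).card = 0)).card
      ≤ ∑ l ∈ Lx.erase l₀, (B l).card := by
    calc ((Lx.erase l₀).filter (fun l => ¬ (B l).card = 0)).card
        ≤ ∑ l ∈ (Lx.erase l₀).filter (fun l => ¬ (B l).card = 0), (B l).card := by
          have h1 := Finset.card_nsmul_le_sum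
            ((Lx.erase l₀).filter (fun l => ¬ (B l).card = 0))
            (fun l => (B l).card) 1
            (fun l hl => Nat.one_le_iff_ne_zero.mpr (Finset.mem_filter.mp hl).2)
          simpa [smul_eq_mul, mul_one] using h1
      _ ≤ ∑ l ∈ Lx.erase l₀, (B l).card :=
          Finset.sum_le_sum_of_subset (Finset.filter_subset _ _)
  have hzerocard : ((Lx.erase l₀).filter (fun l => (B l).card = 0)).card ≤ S.card := by
    apply Finset.card_le_card
    intro l hl
    simp only [Finset.mem_filter, Finset.mem_erase] at hl
    rw [hS]
    simp only [Finset.mem_filter]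
    exact ⟨hl.1.2, hl.2⟩
  have hcards2 : ((Lx.erase l₀).filter (fun l => (B l).card = 0)).card
      + ((Lx.erase l₀).filter (fun l => ¬ (B l).card = 0)).card = (Lx.erase l₀).card :=
    Finset.card_filter_add_card_filter_not (s := Lx.erase l₀)
      (p := fun l => (B l).card = 0)
  have herasecard : (Lx.erase l₀).card = Lx.card - 1 := Finset.card_erase_of_mem hl₀Lx
  obtain ⟨q, hq⟩ : ∃ q, p ^ 2 = q := ⟨_, rfl⟩
  rw [hq] at hLxcard hKsum hpq2
  omega

/-- For a two-valued code word with `|K₁| = |K_{p-1}|`, no line through a point of `K₁`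
contains at least `p` points of `K_{p-1}`, and vice versa. -/
theorem no_long_secant_of_balanced {Pt Ln : Type} [Finite Pt] [Finite Ln]
    (p : ℕ) (hp : p.Prime) (hp3 : 3 ≤ p)
    (R : Pt → Ln → Prop) (hPP : IsProjectivePlaneOrder (p ^ 2) R)
    (c : Pt → ZMod p) (hc : IsDualCodeWord p R c)
    (ε : ℕ) (hε1 : 1 ≤ ε) (hε2 : ε ≤ p - 2)
    (hw : (Function.support c).ncard = 2 * p ^ 2 - 2 * p + 2 + ε)
    (hval : ∀ x : Pt, c x = 0 ∨ c x = 1 ∨ c x = -1)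
    (hcard : ({x | c x = 1} : Set Pt).ncard = ({x | c x = -1} : Set Pt).ncard) :
    (∀ l : Ln, (∃ x, R x l ∧ c x = 1) → ¬ p ≤ ({y | R y l ∧ c y = -1} : Set Pt).ncard) ∧
      (∀ l : Ln, (∃ x, R x l ∧ c x = -1) → ¬ p ≤ ({y | R y l ∧ c y = 1} : Set Pt).ncard) := by

  constructor
  · rintro l ⟨x, hx, hcx⟩ hle
    exact aux_no_long_secant p hp hp3 R hPP c hc ε hε2 hw hval hcard l x hx hcx hle
  · rintro l ⟨x, hx, hcx⟩ hle
    have hc' : IsDualCodeWord p R (fun y => -c y) := by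
      intro m
      have h := hc m
      have hfin : ({y : Pt | R y m} : Set Pt).Finite := Set.toFinite _
      rw [finsum_mem_neg_distrib _ hfin, h, neg_zero]
    have hw' : (Function.support (fun y => -c y)).ncard = 2 * p ^ 2 - 2 * p + 2 + ε := by
      have h : Function.support (fun y => -c y) = Function.support c := Function.support_neg c
      rw [h]; exact hw
    have hval' : ∀ y : Pt, -c y = 0 ∨ -c y = 1 ∨ -c y = -1 := by
      intro y
      rcases hval y with h | h | h
      · left; rw [h, neg_zero]
      · right; right; rw [h]
      · right; left; rw [h, neg_neg]
    have hs1 : ({y : Pt | -c y = 1}) = ({y : Pt | c y = -1}) := by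
      ext y
      simp only [Set.mem_setOf_eq, neg_eq_iff_eq_neg]
    have hs2 : ({y : Pt | -c y = -1}) = ({y : Pt | c y = 1}) := by
      ext y
      simp only [Set.mem_setOf_eq, neg_inj]
    have hcard' : ({y : Pt | -c y = 1} : Set Pt).ncard
        = ({y : Pt | -c y = -1} : Set Pt).ncard := by
      rw [hs1, hs2]; exact hcard.symm
    have hle' : p ≤ ({y | R y l ∧ -c y = -1} : Set Pt).ncard := by
      have h : ({y | R y l ∧ -c y = -1} : Set Pt) = ({y | R y l ∧ c y = 1} : Set Pt) := by
        ext y; simp only [Set.mem_setOf_eq, neg_inj]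
      rwa [h]
    exact aux_no_long_secant p hp hp3 R hPP (fun y => -c y) hc' ε hε2 hw' hval' hcard'
      l x hx (by show -c x = 1; rw [hcx, neg_neg]) hle'
end

section
/- Let p ≥ 3 be a prime, Π a finite projective plane of order p², c a code word of C(Π)^⊥ of weight w(c) = 2p² − 2p + 2 + ε with 1 ≤ ε ≤ p − 2, and let S = supp(c). For A ∈ S let x_A, y_A, z_A be the numbers of 2-secants, 3-secants and 4-secants to S through A. Then: (i) 2x_A + y_A ≥ p² + 2p + 2 − ε; (ii) 3x_A + 2y_A + z_A ≥ 2p² + 2p + 3 − ε; and (iii) x_A = 2p + 1 − ε + Σ_L (|L ∩ S| − 3), where the sum ranges over all lines L through A incident with at least 4 points of S. -/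
/-- The number of `k`-secants to the point set `S` through the point `A`. -/
noncomputable def nSecants {P L : Type*} (R : P → L → Prop) (S : Set P) (k : ℕ) (A : P) : ℕ :=
  {l : L | R A l ∧ ({x | R x l} ∩ S).ncard = k}.ncard

/-- Inequalities and an identity for the numbers of `2`-, `3`- and `4`-secants through
a point of the support of a code word of weight `2p² - 2p + 2 + ε`. -/
theorem secant_count_relations {Pt Ln : Type} [Finite Pt] [Finite Ln]
    (p : ℕ) (hp : p.Prime) (hp3 : 3 ≤ p)
    (R : Pt → Ln → Prop) (hPP : IsProjectivePlaneOrder (p ^ 2) R)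
    (c : Pt → ZMod p) (hc : IsDualCodeWord p R c)
    (ε : ℕ) (hε1 : 1 ≤ ε) (hε2 : ε ≤ p - 2)
    (hw : (Function.support c).ncard = 2 * p ^ 2 - 2 * p + 2 + ε)
    (A : Pt) (hA : A ∈ Function.support c) :
    p ^ 2 + 2 * p + 2 - ε ≤
        2 * nSecants R (Function.support c) 2 A + nSecants R (Function.support c) 3 A ∧
    2 * p ^ 2 + 2 * p + 3 - ε ≤
        3 * nSecants R (Function.support c) 2 A + 2 * nSecants R (Function.support c) 3 A +
          nSecants R (Function.support c) 4 A ∧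
    nSecants R (Function.support c) 2 A =
      2 * p + 1 - ε +
        ∑ᶠ l ∈ {l : Ln | R A l ∧ 4 ≤ ({x | R x l} ∩ Function.support c).ncard},
          (({x | R x l} ∩ Function.support c).ncard - 3) := by
  classical
  haveI : Fintype Pt := Fintype.ofFinite Pt
  haveI : Fintype Ln := Fintype.ofFinite Ln
  set S : Set Pt := Function.support c with hSdef
  set Sf : Finset Pt := S.toFinset with hSfdef
  have hSmem : ∀ x : Pt, x ∈ Sf ↔ x ∈ S := fun x => Set.mem_toFinset
  set La : Finset Ln := Finset.univ.filter (fun l => R A l) with hLadef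
  have hLa : ∀ l : Ln, l ∈ La ↔ R A l := by intro l; simp [hLadef]
  have hLacard : La.card = p ^ 2 + 1 := by
    have h := hPP.point_card A
    have he : {l : Ln | R A l} = (La : Set Ln) := by ext l; simp [hLa l]
    rwa [he, Set.ncard_coe_finset] at h
  set mF : Ln → ℕ := fun l => (Sf.filter (fun x => R x l)).card with hmFdef
  have hset : ∀ l : Ln, {x : Pt | R x l} ∩ S = ↑(Sf.filter (fun x => R x l)) := by
    intro l; ext x
    simp only [Set.mem_inter_iff, Set.mem_setOf_eq, Finset.coe_filter, hSmem]
    tauto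
  have hm : ∀ l : Ln, ({x : Pt | R x l} ∩ S).ncard = mF l := by
    intro l; rw [hset l, Set.ncard_coe_finset]
  have hAS : A ∈ S := hA
  -- no tangent lines through A
  have hge2 : ∀ l ∈ La, 2 ≤ mF l := by
    intro l hl
    have hAl : A ∈ Sf.filter (fun x => R x l) := by
      simp only [Finset.mem_filter, hSmem]
      exact ⟨hAS, (hLa l).mp hl⟩
    have h1 : 1 ≤ mF l := Finset.card_pos.mpr ⟨A, hAl⟩
    by_contra h
    have hcard1 : (Sf.filter (fun x => R x l)).card = 1 := by
      simp only [hmFdef] at h1 h ⊢; omega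
    obtain ⟨a, ha⟩ := Finset.card_eq_one.mp hcard1
    have hAa : A = a := by
      have := ha ▸ hAl; simpa using this
    have hsing : {x : Pt | R x l} ∩ S = {A} := by
      rw [hset l, ha, ← hAa]; simp
    have hzero := hc l
    rw [← finsum_mem_inter_support, hsing, finsum_mem_singleton] at hzero
    exact hA hzero
  -- the weight
  have hSfcard : Sf.card = 2 * p ^ 2 - 2 * p + 2 + ε := by
    rw [hSfdef, ← Set.ncard_eq_toFinset_card' S]; exact hw
  have hASf : A ∈ Sf := (hSmem A).mpr hAS
  have hSf1 : 1 ≤ Sf.card := Finset.card_pos.mpr ⟨A, hASf⟩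
  -- double counting
  have hcount : ∑ l ∈ La, mF l = p ^ 2 + 1 + (Sf.card - 1) := by
    have step1 : ∑ l ∈ La, mF l = ∑ x ∈ Sf, (La.filter (fun l => R x l)).card := by
      simp only [hmFdef, Finset.card_filter]
      exact Finset.sum_comm
    have hAterm : (La.filter (fun l => R A l)).card = p ^ 2 + 1 := by
      rw [Finset.filter_eq_self.mpr (fun l hl => (hLa l).mp hl)]; exact hLacard
    have hother : ∀ x ∈ Sf.erase A, (La.filter (fun l => R x l)).card = 1 := by
      intro x hx
      have hxA : x ≠ A := (Finset.mem_erase.mp hx).1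
      obtain ⟨l₀, ⟨h1, h2⟩, huniq⟩ := hPP.existsUnique_line A x (Ne.symm hxA)
      rw [Finset.card_eq_one]
      refine ⟨l₀, ?_⟩
      ext l
      simp only [Finset.mem_filter, hLa, Finset.mem_singleton]
      constructor
      · rintro ⟨hal, hxl⟩; exact huniq l ⟨hal, hxl⟩
      · rintro rfl; exact ⟨h1, h2⟩
    rw [step1, ← Finset.add_sum_erase _ _ hASf, hAterm,
        Finset.sum_congr rfl hother, Finset.sum_const, smul_eq_mul, mul_one,
        Finset.card_erase_of_mem hASf]
  -- splitting lines through A by intersection size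
  have hsplitsum : ∀ f : Ln → ℕ, ∑ l ∈ La, f l =
      ∑ l ∈ La.filter (fun l => mF l = 2), f l +
      (∑ l ∈ La.filter (fun l => mF l = 3), f l +
       ∑ l ∈ La.filter (fun l => 4 ≤ mF l), f l) := by
    intro f
    rw [← Finset.sum_filter_add_sum_filter_not La (fun l => mF l = 2) f]
    congr 1
    rw [← Finset.sum_filter_add_sum_filter_not (La.filter (fun l => ¬ mF l = 2))
        (fun l => mF l = 3) f]
    congr 1
    · rw [Finset.filter_filter]
      exact Finset.sum_congr (Finset.filter_congr (fun l hl => by omega)) (fun _ _ => rfl)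
    · rw [Finset.filter_filter]
      refine Finset.sum_congr (Finset.filter_congr (fun l hl => ?_)) (fun _ _ => rfl)
      have := hge2 l hl
      omega
  have hF1 : La.card = (La.filter (fun l => mF l = 2)).card +
      ((La.filter (fun l => mF l = 3)).card + (La.filter (fun l => 4 ≤ mF l)).card) := by
    have h := hsplitsum (fun _ => 1)
    simpa using h
  have hconstsum : ∀ (k : ℕ) (t : Finset Ln), (∀ l ∈ t, mF l = k) →
      ∑ l ∈ t, mF l = k * t.card := by
    intro k t ht
    rw [Finset.sum_congr rfl ht, Finset.sum_const, smul_eq_mul, mul_comm]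
  have hF2 : ∑ l ∈ La, mF l = 2 * (La.filter (fun l => mF l = 2)).card +
      (3 * (La.filter (fun l => mF l = 3)).card +
       ∑ l ∈ La.filter (fun l => 4 ≤ mF l), mF l) := by
    rw [hsplitsum mF,
      hconstsum 2 _ (fun l hl => (Finset.mem_filter.mp hl).2),
      hconstsum 3 _ (fun l hl => (Finset.mem_filter.mp hl).2)]
  have hF3 : 4 * (La.filter (fun l => 4 ≤ mF l)).card ≤
      ∑ l ∈ La.filter (fun l => 4 ≤ mF l), mF l := by
    have := Finset.card_nsmul_le_sum (La.filter (fun l => 4 ≤ mF l)) mF 4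
      (fun l hl => (Finset.mem_filter.mp hl).2)
    rwa [smul_eq_mul, mul_comm] at this
  -- splitting the (≥4)-lines by =4 vs ≥5
  have he4 : (La.filter (fun l => 4 ≤ mF l)).filter (fun l => mF l = 4) =
      La.filter (fun l => mF l = 4) := by
    rw [Finset.filter_filter]
    exact Finset.filter_congr (fun l hl => by omega)
  have hsplit4 : ∑ l ∈ La.filter (fun l => 4 ≤ mF l), mF l =
      4 * (La.filter (fun l => mF l = 4)).card +
      ∑ l ∈ (La.filter (fun l => 4 ≤ mF l)).filter (fun l => ¬ mF l = 4), mF l := by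
    rw [← Finset.sum_filter_add_sum_filter_not (La.filter (fun l => 4 ≤ mF l))
        (fun l => mF l = 4) mF, he4,
      hconstsum 4 _ (fun l hl => (Finset.mem_filter.mp hl).2)]
  have hc4 : (La.filter (fun l => 4 ≤ mF l)).card =
      (La.filter (fun l => mF l = 4)).card +
      ((La.filter (fun l => 4 ≤ mF l)).filter (fun l => ¬ mF l = 4)).card := by
    rw [← Finset.card_filter_add_card_filter_not
      (s := La.filter (fun l => 4 ≤ mF l)) (p := fun l => mF l = 4), he4]
  have h5 : 5 * ((La.filter (fun l => 4 ≤ mF l)).filter (fun l => ¬ mF l = 4)).card ≤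
      ∑ l ∈ (La.filter (fun l => 4 ≤ mF l)).filter (fun l => ¬ mF l = 4), mF l := by
    have := Finset.card_nsmul_le_sum
      ((La.filter (fun l => 4 ≤ mF l)).filter (fun l => ¬ mF l = 4)) mF 5
      (fun l hl => by
        have h1 := (Finset.mem_filter.mp (Finset.mem_filter.mp hl).1).2
        have h2 := (Finset.mem_filter.mp hl).2
        omega)
    rwa [smul_eq_mul, mul_comm] at this
  -- identify nSecants
  have hsec : ∀ k : ℕ, nSecants R S k A = (La.filter (fun l => mF l = k)).card := by
    intro k
    have he : {l : Ln | R A l ∧ ({x : Pt | R x l} ∩ S).ncard = k} =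
        ↑(La.filter (fun l => mF l = k)) := by
      ext l
      simp only [Set.mem_setOf_eq, Finset.coe_filter, hLa, hm]
    rw [nSecants, he, Set.ncard_coe_finset]
  -- the finsum in part (iii)
  have hfin : ∑ᶠ l ∈ {l : Ln | R A l ∧ 4 ≤ ({x : Pt | R x l} ∩ S).ncard},
      (({x : Pt | R x l} ∩ S).ncard - 3) =
      ∑ l ∈ La.filter (fun l => 4 ≤ mF l), (mF l - 3) := by
    have he : {l : Ln | R A l ∧ 4 ≤ ({x : Pt | R x l} ∩ S).ncard} =
        ↑(La.filter (fun l => 4 ≤ mF l)) := by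
      ext l
      simp only [Set.mem_setOf_eq, Finset.coe_filter, hLa, hm]
    rw [he, finsum_mem_coe_finset]
    exact Finset.sum_congr rfl (fun l _ => by rw [hm])
  have hT3 : ∑ l ∈ La.filter (fun l => 4 ≤ mF l), (mF l - 3) +
      3 * (La.filter (fun l => 4 ≤ mF l)).card =
      ∑ l ∈ La.filter (fun l => 4 ≤ mF l), mF l := by
    have h : ∑ l ∈ La.filter (fun l => 4 ≤ mF l), (mF l - 3 + 3) =
        ∑ l ∈ La.filter (fun l => 4 ≤ mF l), mF l :=
      Finset.sum_congr rfl (fun l hl => by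
        have := (Finset.mem_filter.mp hl).2; omega)
    rw [Finset.sum_add_distrib, Finset.sum_const, smul_eq_mul] at h
    omega
  have hq : p ≤ p ^ 2 := Nat.le_self_pow (by norm_num) p
  rw [hsec 2, hsec 3, hsec 4, hfin]
  generalize p ^ 2 = q at hLacard hSfcard hcount hq ⊢
  omega
end

section
/- Let p > 3 be a prime, Π a finite projective plane of order p², and c a code word of C(Π)^⊥ of weight w(c) = 2p² − 2p + 2 + ε with 1 ≤ ε ≤ p − 2. Then there is no λ ∈ {1, ..., p−1} such that |K_λ| = |K_{p−λ}| = 2p + 1 − ε. -/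
/-!
Write `w` for the weight, `K_v` for `level c v` and `m = 2p + 1 - ε`, so that `w + m = 2n + 3`
with `n = p²`. Every line through a point `P` of the support carries a further point of the
support, and if it carries exactly one, that point lies in `K_{-c(P)}`; hence
`2(n + 1) ≤ (w - 1) + |K_{-c(P)}|`. The points of `K_a` and `K_{-a}` attain this bound, so every
line through such a point `P` has at most two further support points, and a line joining `P` to
a support point `X` with `c(X) ≠ -c(P)` has support exactly `{P, X, Y}`. Joining a point of
`K_{-a}` to the others shows `|K_{2a}| ≥ m - 1 > 0`; joining a point of `K_a` to the points of
`K_{-2a}` shows `|K_{-2a}| ≤ m - 1`. The bound at a point of `K_{2a}` then reads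
`2n + 2 ≤ (w - 1) + (m - 1) = 2n + 1`.
-/

open Finset
open scoped Classical

namespace DualCode

variable {Pt Ln F : Type*} {n : ℕ} {R : Pt → Ln → Prop} {c : Pt → F}

noncomputable def supp [Fintype Pt] [Zero F] (c : Pt → F) : Finset Pt := {x | c x ≠ 0}

noncomputable def level [Fintype Pt] (c : Pt → F) (v : F) : Finset Pt := {x | c x = v}

noncomputable def pencil [Fintype Ln] (R : Pt → Ln → Prop) (P : Pt) : Finset Ln := {l | R P l}

noncomputable def lineSupport [Fintype Pt] [Zero F] (R : Pt → Ln → Prop) (c : Pt → F) (l : Ln) :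
    Finset Pt :=
  {x | R x l ∧ c x ≠ 0}

theorem card_supp [Fintype Pt] [Zero F] (c : Pt → F) :
    #(supp c) = (Function.support c).ncard := by
  rw [Set.ncard_eq_toFinset_card', supp, Function.support, Set.toFinset_ofPred]

theorem card_level [Fintype Pt] (c : Pt → F) (v : F) : #(level c v) = {x | c x = v}.ncard := by
  rw [Set.ncard_eq_toFinset_card', level, Set.toFinset_ofPred]

theorem card_pencil [Fintype Ln] (hPP : IsProjectivePlaneOrder n R) (P : Pt) :
    #(pencil R P) = n + 1 := by
  rw [← hPP.point_card P, Set.ncard_eq_toFinset_card', Set.toFinset_ofPred, pencil]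

section

variable [Fintype Pt] [AddCommGroup F]

theorem sum_lineSupport (hc : ∀ l, ∑ᶠ x ∈ {y | R y l}, c x = 0) (l : Ln) :
    ∑ x ∈ lineSupport R c l, c x = 0 := by
  rw [← hc l, ← coe_filter_univ, finsum_mem_coe_finset, lineSupport, ← filter_filter,
    sum_filter_ne_zero]

theorem sum_lineSupport_erase (hc : ∀ l, ∑ᶠ x ∈ {y | R y l}, c x = 0) {P : Pt} {l : Ln}
    (hPl : R P l) (hP : c P ≠ 0) : ∑ x ∈ (lineSupport R c l).erase P, c x = -c P := by
  have hmem : P ∈ lineSupport R c l := by simp [lineSupport, hPl, hP]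
  rw [eq_neg_iff_add_eq_zero, add_comm, add_sum_erase _ _ hmem, sum_lineSupport hc]

theorem lineSupport_erase_nonempty (hc : ∀ l, ∑ᶠ x ∈ {y | R y l}, c x = 0) {P : Pt} {l : Ln}
    (hPl : R P l) (hP : c P ≠ 0) : ((lineSupport R c l).erase P).Nonempty := by
  by_contra! hempty
  have := sum_lineSupport_erase hc hPl hP
  rw [hempty, sum_empty, eq_comm, neg_eq_zero] at this
  exact hP this

theorem eq_neg_of_lineSupport_erase_eq_singleton (hc : ∀ l, ∑ᶠ x ∈ {y | R y l}, c x = 0)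
    {P Q : Pt} {l : Ln} (hPl : R P l) (hP : c P ≠ 0) (hQ : (lineSupport R c l).erase P = {Q}) :
    c Q = -c P := by
  rw [← sum_lineSupport_erase hc hPl hP, hQ, sum_singleton]

end

section

variable [Fintype Pt] [Fintype Ln] [AddCommGroup F]

theorem sum_card_lineSupport_erase (hPP : IsProjectivePlaneOrder n R) (c : Pt → F) (P : Pt) :
    ∑ l ∈ pencil R P, #((lineSupport R c l).erase P) = #((supp c).erase P) := by
  rw [← card_biUnion]
  · congr 1
    ext x
    simp only [mem_biUnion, pencil, lineSupport, supp, mem_erase, mem_filter, mem_univ, true_and]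
    constructor
    · rintro ⟨l, -, hxP, -, hx⟩
      exact ⟨hxP, hx⟩
    · rintro ⟨hxP, hx⟩
      obtain ⟨l, ⟨hxl, hPl⟩, -⟩ := hPP.existsUnique_line x P hxP
      exact ⟨l, hPl, hxP, hxl, hx⟩
  · intro l hl l' hl' hll'
    simp only [coe_filter, pencil, mem_univ, true_and, Set.mem_ofPred_eq] at hl hl'
    refine disjoint_left.mpr fun x hx hx' => hll' ?_
    simp only [lineSupport, mem_erase, mem_filter, mem_univ, true_and] at hx hx'
    exact (hPP.existsUnique_line x P hx.1).unique ⟨hx.2.1, hl⟩ ⟨hx'.2.1, hl'⟩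

theorem card_filter_card_lineSupport_erase_eq_one_le (hPP : IsProjectivePlaneOrder n R)
    (hc : ∀ l, ∑ᶠ x ∈ {y | R y l}, c x = 0) {P : Pt} (hP : c P ≠ 0) :
    #{l ∈ pencil R P | #((lineSupport R c l).erase P) = 1} ≤ #(level c (-c P)) := by
  have hsingle : ∀ l ∈ {l ∈ pencil R P | #((lineSupport R c l).erase P) = 1},
      ∃ Q, (lineSupport R c l).erase P = {Q} := fun l hl => card_eq_one.mp (mem_filter.mp hl).2
  have : Nonempty Pt := ⟨P⟩
  choose! Q hQ using hsingle
  have hQmem : ∀ l ∈ {l ∈ pencil R P | #((lineSupport R c l).erase P) = 1},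
      R P l ∧ Q l ≠ P ∧ R (Q l) l := fun l hl => by
    have hPl : R P l := by simpa [pencil] using (mem_filter.mp hl).1
    have : Q l ∈ (lineSupport R c l).erase P := by rw [hQ l hl]; exact mem_singleton_self _
    simp only [lineSupport, mem_erase, mem_filter, mem_univ, true_and] at this
    exact ⟨hPl, this.1, this.2.1⟩
  refine card_le_card_of_injOn Q (fun l hl => ?_) (fun l hl l' hl' hQQ => ?_)
  · simpa [level] using eq_neg_of_lineSupport_erase_eq_singleton hc (hQmem l hl).1 hP (hQ l hl)
  · obtain ⟨hPl, hQP, hQl⟩ := hQmem l hl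
    obtain ⟨hPl', -, hQl'⟩ := hQmem l' hl'
    rw [hQQ] at hQP hQl
    exact (hPP.existsUnique_line _ P hQP).unique ⟨hQl, hPl⟩ ⟨hQl', hPl'⟩

theorem sum_max_card_lineSupport_erase_two_le (hPP : IsProjectivePlaneOrder n R)
    (hc : ∀ l, ∑ᶠ x ∈ {y | R y l}, c x = 0) {P : Pt} (hP : c P ≠ 0) :
    ∑ l ∈ pencil R P, max #((lineSupport R c l).erase P) 2 ≤
      #((supp c).erase P) + #(level c (-c P)) := by
  calc ∑ l ∈ pencil R P, max #((lineSupport R c l).erase P) 2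
      ≤ ∑ l ∈ pencil R P, (#((lineSupport R c l).erase P) +
          if #((lineSupport R c l).erase P) = 1 then 1 else 0) := by
        refine sum_le_sum fun l hl => ?_
        have hpos := (lineSupport_erase_nonempty hc (by simpa [pencil] using hl) hP).card_pos
        split_ifs <;> omega
    _ = #((supp c).erase P) + #{l ∈ pencil R P | #((lineSupport R c l).erase P) = 1} := by
        rw [sum_add_distrib, sum_card_lineSupport_erase hPP, card_filter]
    _ ≤ #((supp c).erase P) + #(level c (-c P)) :=
        Nat.add_le_add_left (card_filter_card_lineSupport_erase_eq_one_le hPP hc hP) _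

theorem two_mul_succ_le_card_supp_erase_add_card_level (hPP : IsProjectivePlaneOrder n R)
    (hc : ∀ l, ∑ᶠ x ∈ {y | R y l}, c x = 0) {P : Pt} (hP : c P ≠ 0) :
    2 * (n + 1) ≤ #((supp c).erase P) + #(level c (-c P)) :=
  calc 2 * (n + 1) = ∑ _l ∈ pencil R P, 2 := by
        rw [sum_const, card_pencil hPP, smul_eq_mul, mul_comm]
    _ ≤ ∑ l ∈ pencil R P, max #((lineSupport R c l).erase P) 2 :=
        sum_le_sum fun _ _ => le_max_right _ _
    _ ≤ _ := sum_max_card_lineSupport_erase_two_le hPP hc hP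

theorem card_lineSupport_erase_le_two (hPP : IsProjectivePlaneOrder n R)
    (hc : ∀ l, ∑ᶠ x ∈ {y | R y l}, c x = 0) {P : Pt} (hP : c P ≠ 0)
    (htight : #((supp c).erase P) + #(level c (-c P)) ≤ 2 * (n + 1)) {l : Ln} (hPl : R P l) :
    #((lineSupport R c l).erase P) ≤ 2 := by
  have hl : l ∈ pencil R P := by simpa [pencil] using hPl
  have hrest : 2 * n ≤ ∑ l' ∈ (pencil R P).erase l, max #((lineSupport R c l').erase P) 2 :=
    calc 2 * n = ∑ _l' ∈ (pencil R P).erase l, 2 := by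
          rw [sum_const, card_erase_of_mem hl, card_pencil hPP, smul_eq_mul, mul_comm]; rfl
      _ ≤ _ := sum_le_sum fun _ _ => le_max_right _ _
  have := sum_max_card_lineSupport_erase_two_le hPP hc hP
  rw [← add_sum_erase _ _ hl] at this
  have := le_max_left #((lineSupport R c l).erase P) 2
  omega

theorem exists_lineSupport_erase_eq_pair (hPP : IsProjectivePlaneOrder n R)
    (hc : ∀ l, ∑ᶠ x ∈ {y | R y l}, c x = 0) {P : Pt} (hP : c P ≠ 0)
    (htight : #((supp c).erase P) + #(level c (-c P)) ≤ 2 * (n + 1)) {l : Ln} (hPl : R P l)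
    {X : Pt} (hX : X ∈ (lineSupport R c l).erase P) (hXP : c X ≠ -c P) :
    ∃ Y, (lineSupport R c l).erase P = {X, Y} ∧ Y ≠ X ∧ c P + c X + c Y = 0 := by
  have hne_one : #((lineSupport R c l).erase P) ≠ 1 := fun h => by
    obtain ⟨Q, hQ⟩ := card_eq_one.mp h
    rw [hQ, mem_singleton] at hX
    exact hXP (hX ▸ eq_neg_of_lineSupport_erase_eq_singleton hc hPl hP hQ)
  have hone : #(((lineSupport R c l).erase P).erase X) = 1 := by
    have := card_lineSupport_erase_le_two hPP hc hP htight hPl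
    have := card_erase_of_mem hX
    have := card_pos.mpr ⟨X, hX⟩
    omega
  obtain ⟨Y, hY⟩ := card_eq_one.mp hone
  have hpair : (lineSupport R c l).erase P = {X, Y} := by rw [← insert_erase hX, hY]
  have hYX : Y ≠ X := ne_of_mem_erase (hY ▸ mem_singleton_self Y)
  refine ⟨Y, hpair, hYX, ?_⟩
  have := sum_lineSupport_erase hc hPl hP
  rw [hpair, sum_pair hYX.symm] at this
  rw [add_assoc, this, add_neg_cancel]

theorem card_level_erase_le (hPP : IsProjectivePlaneOrder n R)
    (hc : ∀ l, ∑ᶠ x ∈ {y | R y l}, c x = 0) {P : Pt} (hP : c P ≠ 0)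
    (htight : #((supp c).erase P) + #(level c (-c P)) ≤ 2 * (n + 1)) {v u : F} (hv : v ≠ 0)
    (hvP : v ≠ -c P) (hu : c P + v + u = 0) :
    #((level c v).erase P) ≤ #((level c u).erase P) := by
  have third : ∀ X ∈ (level c v).erase P, ∃ Y, Y ≠ X ∧ c Y = u ∧
      ∃ l, R P l ∧ (lineSupport R c l).erase P = {X, Y} := fun X hX => by
    obtain ⟨hXP, hXv⟩ : X ≠ P ∧ c X = v := by simpa [level] using hX
    obtain ⟨l, ⟨hXl, hPl⟩, -⟩ := hPP.existsUnique_line X P hXP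
    obtain ⟨Y, hpair, hYX, hsum⟩ := exists_lineSupport_erase_eq_pair hPP hc hP htight hPl
      (by simp [lineSupport, hXP, hXl, hXv, hv]) (hXv ▸ hvP)
    exact ⟨Y, hYX, add_left_cancel (hsum.trans (hXv ▸ hu.symm)), l, hPl, hpair⟩
  have : Nonempty Pt := ⟨P⟩
  choose! Y hYX hYu hline using third
  have hYline : ∀ X ∈ (level c v).erase P, ∀ l, (lineSupport R c l).erase P = {X, Y X} →
      Y X ≠ P ∧ R (Y X) l := fun X hX l hpair => by
    have : Y X ∈ (lineSupport R c l).erase P := by rw [hpair]; simp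
    simp only [lineSupport, mem_erase, mem_filter, mem_univ, true_and] at this
    exact ⟨this.1, this.2.1⟩
  refine card_le_card_of_injOn Y (fun X hX => ?_) (fun X hX X' hX' hYY => ?_)
  · obtain ⟨l, -, hpair⟩ := hline X hX
    simp [level, hYu X hX, (hYline X hX l hpair).1]
  · obtain ⟨l, hPl, hpair⟩ := hline X hX
    obtain ⟨l', hPl', hpair'⟩ := hline X' hX'
    obtain ⟨hYP, hYl⟩ := hYline X hX l hpair
    obtain ⟨-, hYl'⟩ := hYline X' hX' l' hpair'
    rw [← hYY] at hYl'
    have hll : l = l' := (hPP.existsUnique_line _ P hYP).unique ⟨hYl, hPl⟩ ⟨hYl', hPl'⟩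
    have : X' ∈ (lineSupport R c l).erase P := by rw [hll, hpair']; simp
    rw [hpair, mem_insert, mem_singleton, hYY] at this
    exact (this.resolve_right (hYX X' hX').symm).symm

theorem not_card_level_eq_and_card_level_neg_eq (hPP : IsProjectivePlaneOrder n R)
    (hc : ∀ l, ∑ᶠ x ∈ {y | R y l}, c x = 0) {a : F} (h2 : 2 • a ≠ 0) (h3 : 3 • a ≠ 0) {m : ℕ}
    (hm : 2 ≤ m) (hw : #(supp c) + m = 2 * n + 3) :
    ¬(#(level c a) = m ∧ #(level c (-a)) = m) := by
  rintro ⟨hKa, hKna⟩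
  have ha : a ≠ 0 := by rintro rfl; simp at h2
  have hneg : -a ≠ a := fun h => h2 (by rw [show 2 • a = a - -a by abel, h, sub_self])
  have hneg2 : -(2 • a) ≠ -a := fun h => ha (by simpa [two_nsmul] using neg_inj.mp h)
  have hneg3 : a ≠ -(2 • a) := fun h =>
    h3 (by rw [show 3 • a = a - -(2 • a) by abel, ← h, sub_self])
  have htight : ∀ P, c P = a ∨ c P = -a →
      #((supp c).erase P) + #(level c (-c P)) ≤ 2 * (n + 1) := fun P hP => by
    have hPs : P ∈ supp c := by rcases hP with h | h <;> simp [supp, h, ha]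
    have := card_erase_add_one hPs
    rcases hP with h | h <;> rw [h] <;> simp only [neg_neg, hKa, hKna] <;> omega
  obtain ⟨Q, hQ⟩ : (level c (-a)).Nonempty := card_pos.mp (by omega)
  obtain ⟨Q', hQ'⟩ : (level c a).Nonempty := card_pos.mp (by omega)
  have hQv : c Q = -a := by simpa [level] using hQ
  have hQ'v : c Q' = a := by simpa [level] using hQ'
  have hK2a : m - 1 ≤ #(level c (2 • a)) :=
    calc m - 1 = #((level c (-a)).erase Q) := by rw [card_erase_of_mem hQ, hKna]
      _ ≤ #((level c (2 • a)).erase Q) :=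
          card_level_erase_le hPP hc (hQv ▸ neg_ne_zero.mpr ha) (htight Q (.inr hQv))
            (neg_ne_zero.mpr ha) (by rwa [hQv, neg_neg]) (by rw [hQv]; abel)
      _ ≤ #(level c (2 • a)) := card_erase_le
  have hKneg2a : #(level c (-(2 • a))) ≤ m - 1 :=
    calc #(level c (-(2 • a))) = #((level c (-(2 • a))).erase Q') := by
          rw [erase_eq_of_notMem (by simpa [level, hQ'v] using hneg3)]
      _ ≤ #((level c a).erase Q') :=
          card_level_erase_le hPP hc (hQ'v ▸ ha) (htight Q' (.inl hQ'v)) (neg_ne_zero.mpr h2)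
            (by rwa [hQ'v]) (by rw [hQ'v]; abel)
      _ = m - 1 := by rw [card_erase_of_mem hQ', hKa]
  obtain ⟨X, hX⟩ : (level c (2 • a)).Nonempty := card_pos.mp (by omega)
  have hXv : c X = 2 • a := by simpa [level] using hX
  have hXs : X ∈ supp c := by simp [supp, hXv, h2]
  have := two_mul_succ_le_card_supp_erase_add_card_level hPP hc (hXv ▸ h2)
  rw [hXv] at this
  have := card_erase_add_one hXs
  omega

end

end DualCode

theorem ZMod.nsmul_ne_zero {p k : ℕ} [Fact p.Prime] {a : ZMod p} (ha : a ≠ 0) (hk : 0 < k)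
    (hkp : k < p) : k • a ≠ 0 := by
  rw [nsmul_eq_mul]
  refine mul_ne_zero (fun h => ?_) ha
  rw [ZMod.natCast_eq_zero_iff] at h
  exact absurd (Nat.le_of_dvd hk h) (not_le.mpr hkp)

theorem no_opposite_pair_minimal_general {Pt Ln : Type} [Finite Pt] [Finite Ln]
    (p : ℕ) (hp : p.Prime) (hp3 : 3 < p)
    (R : Pt → Ln → Prop) (hPP : IsProjectivePlaneOrder (p ^ 2) R)
    (c : Pt → ZMod p) (hc : IsDualCodeWord p R c)
    (ε : ℕ) (hε2 : ε ≤ p - 2)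
    (hw : (Function.support c).ncard = 2 * p ^ 2 - 2 * p + 2 + ε) :
    ∀ a : ZMod p, a ≠ 0 →
      ¬(({x | c x = a} : Set Pt).ncard = 2 * p + 1 - ε ∧
        ({x | c x = -a} : Set Pt).ncard = 2 * p + 1 - ε) := by
  have := Fintype.ofFinite Pt
  have := Fintype.ofFinite Ln
  have : Fact p.Prime := ⟨hp⟩
  intro a ha
  rw [← DualCode.card_level, ← DualCode.card_level]
  have hpp : p ≤ p ^ 2 := Nat.le_self_pow two_ne_zero p
  refine DualCode.not_card_level_eq_and_card_level_neg_eq hPP hc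
    (ZMod.nsmul_ne_zero ha (by norm_num) (by omega))
    (ZMod.nsmul_ne_zero ha (by norm_num) hp3) (by omega) ?_
  rw [DualCode.card_supp, hw]
  omega

/-- For `p > 3` there is no colour `λ` with `|K_λ| = |K_{p-λ}| = 2p + 1 - ε`. -/
theorem no_opposite_pair_minimal {Pt Ln : Type} [Finite Pt] [Finite Ln]
    (p : ℕ) (hp : p.Prime) (hp3 : 3 < p)
    (R : Pt → Ln → Prop) (hPP : IsProjectivePlaneOrder (p ^ 2) R)
    (c : Pt → ZMod p) (hc : IsDualCodeWord p R c)
    (ε : ℕ) (hε1 : 1 ≤ ε) (hε2 : ε ≤ p - 2)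
    (hw : (Function.support c).ncard = 2 * p ^ 2 - 2 * p + 2 + ε) :
    ∀ a : ZMod p, a ≠ 0 →
      ¬(({x | c x = a} : Set Pt).ncard = 2 * p + 1 - ε ∧
        ({x | c x = -a} : Set Pt).ncard = 2 * p + 1 - ε) :=
  no_opposite_pair_minimal_general p hp hp3 R hPP c hc ε hε2 hw
end
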